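/- arXiv:math-ph/0304016 — 7 statements merged into one kernel-verified Lean document; each statement's English description precedes it below -/
import Mathlib

section
/- Let (X, μ) be a measure space and let f₁,…,f_k and g₁,…,g_k be square-integrable functions on X. Then the k-fold integral of det(fᵢ(xⱼ))·det(gᵢ(xⱼ)) with respect to μ(x₁)⋯μ(x_k) equals k! times det(∫_X fᵢ(x)gⱼ(x) dμ(x)). -/
/-!
Expand both determinants by the Leibniz formula: the integrand becomes a signed sum over pairs of
permutations `(σ, τ)` of `∏ j, f (σ j) (x j) * g (τ j) (x j)`. Each such term is a product of
functions of separate coordinates, each integrable by Cauchy–Schwarz, so by Fubini it integrates to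
`∏ j, A (σ j) (τ j)` with `A i j = ∫ f i * g j`. Finally, for fixed `σ` the signed sum over `τ` is
`det A`, so the double sum is `k! * det A`.
-/

open MeasureTheory Matrix Equiv

namespace Matrix

variable {n R : Type*} [Fintype n] [DecidableEq n] [CommRing R]

theorem det_mul_det_eq_sum_perm_sum_perm (A B : Matrix n n R) :
    A.det * B.det = ∑ σ : Perm n, ∑ τ : Perm n,
      ((σ.sign * τ.sign : ℤ) : R) * ∏ j, A (σ j) j * B (τ j) j := by
  rw [det_apply', det_apply', Finset.sum_mul_sum]
  refine Finset.sum_congr rfl fun σ _ => Finset.sum_congr rfl fun τ _ => ?_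
  rw [Finset.prod_mul_distrib]
  push_cast
  ring

theorem sum_perm_sum_perm_sign_mul_prod (A : Matrix n n R) :
    ∑ σ : Perm n, ∑ τ : Perm n, ((σ.sign * τ.sign : ℤ) : R) * ∏ j, A (σ j) (τ j)
      = (Fintype.card n).factorial * A.det := by
  have h_inner (σ : Perm n) :
      ∑ τ : Perm n, ((σ.sign * τ.sign : ℤ) : R) * ∏ j, A (σ j) (τ j) = A.det := by
    -- reindex by `ρ = τ * σ⁻¹`, for which `sign ρ = sign σ * sign τ`
    rw [← det_transpose, det_apply']
    refine Fintype.sum_equiv (Equiv.mulRight σ⁻¹) _ _ fun τ => ?_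
    rw [Equiv.coe_mulRight, Perm.sign_mul, Perm.sign_inv,
      ← Equiv.prod_comp σ fun i => Aᵀ ((τ * σ⁻¹) i) i]
    simp only [transpose_apply, Perm.mul_apply, Perm.coe_inv, symm_apply_apply]
    push_cast
    ring
  simp only [h_inner, Finset.sum_const, Finset.card_univ, Fintype.card_perm, nsmul_eq_mul]

end Matrix

section Andreief

variable {X ι : Type*} [MeasurableSpace X] {μ : Measure X} [SigmaFinite μ] [Fintype ι]
  {f g : ι → X → ℝ}

theorem integrable_pi_prod_mul_perm (hfg : ∀ i j, Integrable (fun t => f i t * g j t) μ)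
    (σ τ : Perm ι) :
    Integrable (fun x : ι → X => ∏ j, f (σ j) (x j) * g (τ j) (x j))
      (Measure.pi fun _ => μ) :=
  Integrable.fintype_prod fun j => hfg (σ j) (τ j)

variable [DecidableEq ι]

theorem integrable_det_mul_det (hfg : ∀ i j, Integrable (fun t => f i t * g j t) μ) :
    Integrable (fun x : ι → X =>
      (of fun i j => f i (x j)).det * (of fun i j => g i (x j)).det) (Measure.pi fun _ => μ) := by
  simp_rw [det_mul_det_eq_sum_perm_sum_perm]
  exact integrable_finsetSum _ fun σ _ => integrable_finsetSum _ fun τ _ =>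
    (integrable_pi_prod_mul_perm hfg σ τ).const_mul _

theorem integral_det_mul_det (hfg : ∀ i j, Integrable (fun t => f i t * g j t) μ) :
    ∫ x : ι → X, (of fun i j => f i (x j)).det * (of fun i j => g i (x j)).det
        ∂(Measure.pi fun _ => μ)
      = (Fintype.card ι).factorial * (of fun i j => ∫ t, f i t * g j t ∂μ).det := by
  simp_rw [det_mul_det_eq_sum_perm_sum_perm, ← sum_perm_sum_perm_sign_mul_prod, of_apply]
  rw [integral_finsetSum _ fun σ _ => integrable_finsetSum _ fun τ _ =>
    (integrable_pi_prod_mul_perm hfg σ τ).const_mul _]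
  refine Finset.sum_congr rfl fun σ _ => ?_
  rw [integral_finsetSum _ fun τ _ => (integrable_pi_prod_mul_perm hfg σ τ).const_mul _]
  refine Finset.sum_congr rfl fun τ _ => ?_
  rw [integral_const_mul, integral_fintype_prod_eq_prod (fun j t => f (σ j) t * g (τ j) t)]

end Andreief

/-- Andréief's integral version of the Binet–Cauchy formula. -/
theorem andreief_formula {X : Type*} [MeasurableSpace X] (μ : Measure X) [SigmaFinite μ]
    (k : ℕ) (f g : Fin k → X → ℝ)
    (hf : ∀ i, MemLp (f i) 2 μ) (hg : ∀ i, MemLp (g i) 2 μ) :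
    Integrable (fun x : Fin k → X =>
      (Matrix.of fun i j => f i (x j)).det * (Matrix.of fun i j => g i (x j)).det)
      (Measure.pi fun _ => μ) ∧
    ∫ x : Fin k → X,
        (Matrix.of fun i j => f i (x j)).det * (Matrix.of fun i j => g i (x j)).det
        ∂(Measure.pi fun _ => μ)
      = (k.factorial : ℝ) * (Matrix.of fun i j => ∫ t, f i t * g j t ∂μ).det := by
  have hfg (i j : Fin k) : Integrable (fun t => f i t * g j t) μ :=
    (hf i).integrable_mul (hg j)
  refine ⟨integrable_det_mul_det hfg, ?_⟩
  simpa only [Fintype.card_fin] using integral_det_mul_det hfg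
end

section
/- Nonvanishing of the Christoffel determinant: if μ₁,…,μ_{ℓ} are distinct real numbers lying strictly above the support of dα, then the ℓ×ℓ determinant det(π_{n+j−1}(μᵢ))₁≤i,j≤ℓ, built from the monic orthogonal polynomials π_n,…,π_{n+ℓ−1}, is nonzero. -/
/-!
Suppose the determinant vanishes. A nonzero kernel vector `c` gives a polynomial
`P = ∑ⱼ cⱼ π_{n+j}` which is nonzero (the `π_j` have distinct degrees), has degree `< n + ℓ`,
is orthogonal to all polynomials of degree `< n`, and vanishes at every `μᵢ`. Hence
`P = W R` with `W = ∏ᵢ (X - μᵢ)` and `deg R < n`, so `0 = ∫ P R dα = ∫ W R² dα`. But on the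
support `[-Q, Q]` the polynomial `W` has the constant sign `(-1)^ℓ` and is bounded away from `0`,
so `∫ W R² dα ≠ 0`.
-/

open MeasureTheory Polynomial Matrix Submodule

section CompactSupport

variable (α : Measure ℝ) [IsFiniteMeasure α]

theorem Continuous.integrable_of_measure_compl_eq_zero {f : ℝ → ℝ} (hf : Continuous f)
    {s : Set ℝ} (hs : IsCompact s) (hαs : α sᶜ = 0) : Integrable f α := by
  have hrestrict : α.restrict s = α := Measure.restrict_eq_self_of_ae_mem hαs
  simpa only [IntegrableOn, hrestrict] using hf.continuousOn.integrableOn_compact (μ := α) hs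

variable {Q : ℝ}

theorem integral_eval_mul_eq_zero_of_mem_span (hQ : α (Set.Icc (-Q) Q)ᶜ = 0)
    {p : ℝ[X]} {s : Set ℝ[X]} (h : ∀ q ∈ s, ∫ t, p.eval t * q.eval t ∂α = 0)
    {q : ℝ[X]} (hq : q ∈ span ℝ s) : ∫ t, p.eval t * q.eval t ∂α = 0 := by
  have hint (r : ℝ[X]) : Integrable (fun t ↦ p.eval t * r.eval t) α :=
    Continuous.integrable_of_measure_compl_eq_zero α (by fun_prop) isCompact_Icc hQ
  induction hq using span_induction with
  | mem q hq => exact h q hq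
  | zero => simp
  | add q r _ _ hq hr => simp only [eval_add, mul_add, integral_add (hint q) (hint r), hq, hr,
      add_zero]
  | smul a q _ hq => simp only [eval_smul, smul_eq_mul, mul_left_comm, integral_const_mul, hq,
      mul_zero]

theorem integral_eval_mul_eq_zero_of_mem_span_of_mem_span (hQ : α (Set.Icc (-Q) Q)ᶜ = 0)
    {s s' : Set ℝ[X]} (h : ∀ p ∈ s, ∀ q ∈ s', ∫ t, p.eval t * q.eval t ∂α = 0) {p q : ℝ[X]}
    (hp : p ∈ span ℝ s) (hq : q ∈ span ℝ s') : ∫ t, p.eval t * q.eval t ∂α = 0 := by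
  have hq' (p' : ℝ[X]) (hp' : p' ∈ s) : ∫ t, q.eval t * p'.eval t ∂α = 0 := by
    simpa only [mul_comm] using
      integral_eval_mul_eq_zero_of_mem_span α hQ (h p' hp') hq
  simpa only [mul_comm] using integral_eval_mul_eq_zero_of_mem_span α hQ hq' hp

theorem integral_prod_sub_mul_sq_pos (hQ : α (Set.Icc (-Q) Q)ᶜ = 0)
    {ι : Type*} [Fintype ι] {μ : ι → ℝ} (hμQ : ∀ i, Q < μ i)
    {f : ℝ → ℝ} (hf : Continuous f) (hf2 : 0 < ∫ t, f t ^ 2 ∂α) :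
    0 < ∫ t, (∏ i, (μ i - t)) * f t ^ 2 ∂α := by
  have hint {g : ℝ → ℝ} (hg : Continuous g) : Integrable g α :=
    hg.integrable_of_measure_compl_eq_zero α isCompact_Icc hQ
  have hc : 0 < ∏ i, (μ i - Q) := Finset.prod_pos fun i _ ↦ sub_pos.mpr (hμQ i)
  have hbound : ∀ᵐ t ∂α, (∏ i, (μ i - Q)) * f t ^ 2 ≤ (∏ i, (μ i - t)) * f t ^ 2 := by
    filter_upwards [show ∀ᵐ t ∂α, t ∈ Set.Icc (-Q) Q from hQ] with t ht
    gcongr with i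
    · exact fun i _ ↦ (sub_pos.mpr (hμQ i)).le
    · exact ht.2
  calc 0 < ∫ t, (∏ i, (μ i - Q)) * f t ^ 2 ∂α := by rw [integral_const_mul]; positivity
    _ ≤ ∫ t, (∏ i, (μ i - t)) * f t ^ 2 ∂α :=
      integral_mono_ae (hint (by fun_prop)) (hint (by fun_prop)) hbound

theorem add_card_le_natDegree_of_orthogonal_of_isRoot (hQ : α (Set.Icc (-Q) Q)ᶜ = 0)
    (hposdef : ∀ p : ℝ[X], p ≠ 0 → 0 < ∫ t, p.eval t ^ 2 ∂α)
    {n : ℕ} {P : ℝ[X]} (hP : P ≠ 0)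
    (horth : ∀ q ∈ degreeLT ℝ n, ∫ t, P.eval t * q.eval t ∂α = 0)
    {ι : Type*} [Fintype ι] {μ : ι → ℝ} (hμ : Function.Injective μ) (hμQ : ∀ i, Q < μ i)
    (hroot : ∀ i, P.IsRoot (μ i)) :
    n + Fintype.card ι ≤ P.natDegree := by
  obtain ⟨R, rfl⟩ : (∏ i, (X - C (μ i))) ∣ P :=
    Fintype.prod_dvd_of_coprime (pairwise_coprime_X_sub_C hμ) fun i ↦
      dvd_iff_isRoot.mpr (hroot i)
  have hR : R ≠ 0 := right_ne_zero_of_mul hP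
  rw [natDegree_mul (left_ne_zero_of_mul hP) hR, natDegree_finsetProd_X_sub_C_eq_card,
    Finset.card_univ, add_comm n, add_le_add_iff_left]
  by_contra! hRdeg
  have hRmem : R ∈ degreeLT ℝ n := mem_degreeLT.mpr ((natDegree_lt_iff_degree_lt hR).mp hRdeg)
  have hsign : ∫ t, ((∏ i, (X - C (μ i))) * R).eval t * R.eval t ∂α =
      (-1) ^ Fintype.card ι * ∫ t, (∏ i, (μ i - t)) * R.eval t ^ 2 ∂α := by
    rw [← integral_const_mul]
    congr 1 with t
    simp only [eval_mul, eval_prod, eval_sub, eval_X, eval_C, ← neg_sub _ t, Finset.prod_neg,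
      Finset.card_univ]
    ring
  have hpos := integral_prod_sub_mul_sq_pos α hQ hμQ R.continuous (hposdef R hR)
  exact mul_ne_zero (by simp) hpos.ne' (hsign ▸ horth R hRmem)

end CompactSupport

/-- Nonvanishing of the Christoffel determinant `det(π_{n+j-1}(μ_i)) ≠ 0` for distinct
points `μ_i` strictly above the (compact) support of the measure. -/
theorem christoffel_determinant_ne_zero (α : Measure ℝ) [IsFiniteMeasure α] (Q : ℝ)
    (hQ : α (Set.Icc (-Q) Q)ᶜ = 0)
    (hposdef : ∀ p : Polynomial ℝ, p ≠ 0 → 0 < ∫ t, (p.eval t) ^ 2 ∂α)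
    (π : ℕ → Polynomial ℝ)
    (hmonic : ∀ j, (π j).Monic) (hdeg : ∀ j, (π j).natDegree = j)
    (horth : ∀ j k, j ≠ k → ∫ t, (π j).eval t * (π k).eval t ∂α = 0)
    (n ℓ : ℕ) (μ : Fin ℓ → ℝ) (hμ : Function.Injective μ) (hμQ : ∀ i, Q < μ i) :
    (Matrix.of fun i j : Fin ℓ => (π (n + j)).eval (μ i)).det ≠ 0 := by
  let S : Sequence ℝ := ⟨π, fun j ↦ by rw [degree_eq_natDegree (hmonic j).ne_zero, hdeg]⟩
  have hunit (j : ℕ) : IsUnit (S j).leadingCoeff := (hmonic j).leadingCoeff ▸ isUnit_one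
  intro hdet
  obtain ⟨c, hc, hc_ker⟩ := exists_mulVec_eq_zero_iff.mpr hdet
  set P := ∑ j : Fin ℓ, c j • π (n + j)
  have hP_mem : P ∈ span ℝ (S '' Set.Ico n (n + ℓ)) :=
    sum_mem fun j _ ↦ smul_mem _ _ (subset_span ⟨n + j, by simp, rfl⟩)
  have hP : P ≠ 0 := fun hP ↦ hc <| funext <| Fintype.linearIndependent_iff.mp
    (S.linearIndependent.comp _ ((add_right_injective n).comp Fin.val_injective)) c hP
  have hroot (i : Fin ℓ) : P.IsRoot (μ i) := by
    simpa [P, eval_finsetSum, mulVec, dotProduct, mul_comm] using congrFun hc_ker i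
  have hPorth : ∀ q ∈ degreeLT ℝ n, ∫ t, P.eval t * q.eval t ∂α = 0 := by
    rw [← S.span_degreeLT fun j _ ↦ hunit j]
    refine fun q hq ↦ integral_eval_mul_eq_zero_of_mem_span_of_mem_span α hQ ?_ hP_mem hq
    rintro _ ⟨j, hj, rfl⟩ _ ⟨k, hk, rfl⟩
    exact horth j k (hk.trans_le hj.1).ne'
  have hPdeg : P.natDegree < n + ℓ := by
    have : P ∈ degreeLT ℝ (n + ℓ) := S.span_degreeLT (fun j _ ↦ hunit j) ▸
      span_mono (Set.image_mono Set.Ico_subset_Iio_self) hP_mem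
    exact (natDegree_lt_iff_degree_lt hP).mpr (mem_degreeLT.mp this)
  have hle := add_card_le_natDegree_of_orthogonal_of_isRoot α hQ hposdef hP hPorth hμ hμQ hroot
  rw [Fintype.card_fin] at hle
  exact hPdeg.not_ge hle
end

section
/- Christoffel's formula: the n-th monic orthogonal polynomial π_n^{[ℓ]} for the modified measure ∏_{j=1}^{ℓ}(μ_j − t) dα(t) equals, up to division by (t−μ₁)⋯(t−μ_ℓ), the ratio of the (ℓ+1)×(ℓ+1) determinant with rows (π_n(μᵢ),…,π_{n+ℓ}(μᵢ)) for i=1,…,ℓ and last row (π_n(t),…,π_{n+ℓ}(t)), divided by the ℓ×ℓ determinant det(π_{n+j−1}(μᵢ)). -/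
/-!
The polynomial `D(x)` given by the `(ℓ+1)×(ℓ+1)` determinant with last row `π_{n+j}(x)` is,
by cofactor expansion along that row, a combination of `π_n, …, π_{n+ℓ}` in which `π_{n+ℓ}` has
coefficient `Δ = det (π_{n+j}(μ_i))`; so `D` is `α`-orthogonal to every polynomial of degree `< n`,
and it vanishes at each `μ_i`. Hence `D = ∏ (x - μ_i) q` with `deg q ≤ n`, and `q` is orthogonal to
all lower degrees for the modified measure, so `q = Δ π_n^{[ℓ]}`. That `Δ ≠ 0` comes from the same
argument: a nonzero combination of `π_n, …, π_{n+ℓ-1}` vanishing at every `μ_i` would be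
`∏ (x - μ_i) r` with `deg r < n`, which forces `∫ r² ∏ (μ_i - x) dα = 0`.
-/

open MeasureTheory Polynomial Matrix Lagrange Finset

namespace Christoffel

section Algebra

variable {K : Type*} [Field K]

structure IsMonicOrthogonal (φ : K[X] →ₗ[K] K) (π : ℕ → K[X]) : Prop where
  monic : ∀ j, (π j).Monic
  natDegree_eq : ∀ j, (π j).natDegree = j
  orthogonal : ∀ j k, j ≠ k → φ (π j * π k) = 0

namespace IsMonicOrthogonal

variable {φ : K[X] →ₗ[K] K} {π : ℕ → K[X]}

def toSequence (hπ : IsMonicOrthogonal φ π) : Polynomial.Sequence K where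
  elems' := π
  degree_eq' j := by rw [degree_eq_natDegree (hπ.monic j).ne_zero, hπ.natDegree_eq]

theorem degree_eq (hπ : IsMonicOrthogonal φ π) (j : ℕ) : (π j).degree = j :=
  hπ.toSequence.degree_eq j

theorem apply_mul_eq_zero (hπ : IsMonicOrthogonal φ π) {p : K[X]} {j : ℕ}
    (hp : p.degree < j) : φ (p * π j) = 0 := by
  have hspan := hπ.toSequence.span_degreeLT (m := j) fun i _ => by
    simp [toSequence, (hπ.monic i).leadingCoeff]
  have hp : p ∈ Submodule.span K (π '' Set.Iio j) := hspan ▸ mem_degreeLT.mpr hp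
  suffices Submodule.span K (π '' Set.Iio j) ≤ LinearMap.ker (φ ∘ₗ LinearMap.mulRight K (π j)) from
    this hp
  rw [Submodule.span_le]
  rintro _ ⟨i, hi, rfl⟩
  exact hπ.orthogonal i j (ne_of_lt hi)

theorem sum_smul_mem_degreeLT (hπ : IsMonicOrthogonal φ π) (n : ℕ) {m : ℕ} (c : Fin m → K) :
    ∑ j, c j • π (n + j) ∈ degreeLT K (n + m) :=
  Submodule.sum_mem _ fun j _ => Submodule.smul_mem _ _ <| mem_degreeLT.mpr <| by
    rw [hπ.degree_eq]; exact_mod_cast Nat.add_lt_add_left j.isLt n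

theorem coeff_sum_smul_last (hπ : IsMonicOrthogonal φ π) (n : ℕ) {m : ℕ}
    (c : Fin (m + 1) → K) : (∑ j, c j • π (n + j)).coeff (n + m) = c (Fin.last m) := by
  rw [Fin.sum_univ_castSucc, coeff_add, coeff_smul, Fin.val_last, coeff_eq_zero_of_degree_lt
    (by simpa using mem_degreeLT.mp (hπ.sum_smul_mem_degreeLT n (c ∘ Fin.castSucc)))]
  simpa [hπ.natDegree_eq] using congrArg (c (Fin.last m) * ·) (hπ.monic (n + m)).coeff_natDegree

theorem sum_smul_eq_zero_iff (hπ : IsMonicOrthogonal φ π) {n m : ℕ} (c : Fin m → K) :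
    ∑ j, c j • π (n + j) = 0 ↔ c = 0 := by
  have hli := hπ.toSequence.linearIndependent.comp (fun j : Fin m => n + j)
    fun i j hij => Fin.ext (by simpa using hij)
  exact ⟨fun hc => funext (Fintype.linearIndependent_iff.mp hli c hc), fun hc => by simp [hc]⟩

theorem apply_mul_sum_smul_eq_zero (hπ : IsMonicOrthogonal φ π) {r : K[X]} {n : ℕ}
    (hr : r.degree < n) {m : ℕ} (c : Fin m → K) : φ (r * ∑ j, c j • π (n + j)) = 0 := by
  simp only [Finset.mul_sum, mul_smul_comm, map_sum, map_smul]
  refine Finset.sum_eq_zero fun j _ => ?_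
  rw [hπ.apply_mul_eq_zero (hr.trans_le (by exact_mod_cast n.le_add_right j)), smul_zero]

theorem eq_C_coeff_mul (hπ : IsMonicOrthogonal φ π) (hφ : ∀ p, φ (p * p) = 0 → p = 0)
    {q : K[X]} {n : ℕ} (hq : q.degree ≤ n) (horth : ∀ s : K[X], s.degree < n → φ (s * q) = 0) :
    q = C (q.coeff n) * π n := by
  set d := q - C (q.coeff n) * π n
  have hπn : (π n).coeff n = 1 := by
    simpa [hπ.natDegree_eq] using (hπ.monic n).coeff_natDegree
  have hd : d.degree < n := by
    rw [degree_lt_iff_coeff_zero]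
    intro m hm
    rcases hm.eq_or_lt with rfl | hm
    · simp [d, hπn]
    · simp [d, coeff_eq_zero_of_degree_lt (hq.trans_lt (by exact_mod_cast hm)),
        coeff_eq_zero_of_natDegree_lt (hπ.natDegree_eq n ▸ hm)]
  have hdd : φ (d * d) = 0 := by
    rw [show d * d = d * q - q.coeff n • (d * π n) by simp only [d, smul_eq_C_mul]; ring,
      map_sub, map_smul, horth d hd, hπ.apply_mul_eq_zero hd, smul_zero, sub_zero]
  exact sub_eq_zero.mp (hφ d hdd)

end IsMonicOrthogonal

theorem nodal_dvd_of_eval_eq_zero {ι : Type*} {s : Finset ι} {v : ι → K}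
    (hv : Set.InjOn v s) {p : K[X]} (hp : ∀ i ∈ s, p.eval (v i) = 0) : nodal s v ∣ p := by
  rw [nodal_eq]
  refine Finset.prod_dvd_of_coprime (fun i hi j hj hij => ?_)
    fun i hi => dvd_iff_isRoot.mpr (hp i hi)
  exact isCoprime_X_sub_C_of_isUnit_sub <| isUnit_iff_ne_zero.mpr <|
    sub_ne_zero.mpr fun h => hij (hv hi hj h)

end Algebra

section ChristoffelMatrix

variable {R : Type*} [CommRing R] {ℓ : ℕ}

noncomputable def christoffelMatrix (f : Fin (ℓ + 1) → R[X]) (μ : Fin ℓ → R) :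
    Matrix (Fin (ℓ + 1)) (Fin (ℓ + 1)) R[X] :=
  Matrix.of fun i j => if h : (i : ℕ) < ℓ then C ((f j).eval (μ ⟨i, h⟩)) else f j

theorem eval_det_christoffelMatrix (f : Fin (ℓ + 1) → R[X]) (μ : Fin ℓ → R) (t : R) :
    (christoffelMatrix f μ).det.eval t =
      (Matrix.of fun i j : Fin (ℓ + 1) =>
        if h : (i : ℕ) < ℓ then (f j).eval (μ ⟨i, h⟩) else (f j).eval t).det := by
  rw [← coe_evalRingHom, RingHom.map_det]
  congr 1
  ext i j
  by_cases h : (i : ℕ) < ℓ <;> simp [christoffelMatrix, h]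

theorem eval_det_christoffelMatrix_node (f : Fin (ℓ + 1) → R[X]) (μ : Fin ℓ → R) (i : Fin ℓ) :
    (christoffelMatrix f μ).det.eval (μ i) = 0 := by
  rw [eval_det_christoffelMatrix]
  refine det_zero_of_row_eq (Fin.castSucc_lt_last i).ne (funext fun j => ?_)
  simp

theorem exists_det_christoffelMatrix_eq_sum (f : Fin (ℓ + 1) → R[X]) (μ : Fin ℓ → R) :
    ∃ c : Fin (ℓ + 1) → R,
      c (Fin.last ℓ) = (Matrix.of fun i j : Fin ℓ => (f j.castSucc).eval (μ i)).det ∧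
      (christoffelMatrix f μ).det = ∑ j, c j • f j := by
  refine ⟨fun j => (-1) ^ (ℓ + j : ℕ) *
    (Matrix.of fun i i' : Fin ℓ => (f (j.succAbove i')).eval (μ i)).det, ?_, ?_⟩
  · simp [Fin.succAbove_last, ← two_mul]
  · rw [det_succ_row _ (Fin.last ℓ)]
    refine Finset.sum_congr rfl fun j _ => ?_
    have hminor : (christoffelMatrix f μ).submatrix (Fin.last ℓ).succAbove j.succAbove =
        (C : R →+* R[X]).mapMatrix
          (Matrix.of fun i i' : Fin ℓ => (f (j.succAbove i')).eval (μ i)) := by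
      ext i i'
      simp [christoffelMatrix, Fin.succAbove_last]
    rw [hminor, ← RingHom.map_det, smul_eq_C_mul]
    simp [christoffelMatrix]
    ring

end ChristoffelMatrix

section Core

variable {K : Type*} [Field K] {φ : K[X] →ₗ[K] K} {π σ : ℕ → K[X]} {ℓ : ℕ} {μ : Fin ℓ → K}

theorem det_eval_nodes_ne_zero (hπ : IsMonicOrthogonal φ π) (hμ : Function.Injective μ)
    (hψ : ∀ p, φ (nodal univ μ * (p * p)) = 0 → p = 0) (n : ℕ) :
    (Matrix.of fun i j : Fin ℓ => (π (n + j)).eval (μ i)).det ≠ 0 := by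
  intro h0
  obtain ⟨c, hc0, hc⟩ := exists_mulVec_eq_zero_iff.mpr h0
  set p := ∑ j, c j • π (n + j) with hp
  have hp0 : p ≠ 0 := (hπ.sum_smul_eq_zero_iff c).not.mpr hc0
  have hroots : ∀ i ∈ univ, p.eval (μ i) = 0 := fun i _ => by
    simpa [p, eval_finsetSum, mulVec, dotProduct, mul_comm] using congrFun hc i
  obtain ⟨r, hr⟩ := nodal_dvd_of_eval_eq_zero hμ.injOn hroots
  have hr0 : r ≠ 0 := by rintro rfl; exact hp0 (by simpa using hr)
  have hrdeg : r.degree < n := by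
    have hpdeg := (natDegree_lt_iff_degree_lt hp0).mpr
      (mem_degreeLT.mp (hπ.sum_smul_mem_degreeLT n c))
    rw [hr, natDegree_mul nodal_ne_zero hr0, natDegree_nodal, card_univ, Fintype.card_fin]
      at hpdeg
    exact (natDegree_lt_iff_degree_lt hr0).mp (by omega)
  refine hr0 (hψ r ?_)
  rw [← hπ.apply_mul_sum_smul_eq_zero hrdeg c, ← hp, hr]
  ring_nf

theorem det_christoffelMatrix_eq_det_mul_nodal_mul (hπ : IsMonicOrthogonal φ π)
    (hμ : Function.Injective μ) (hσ : IsMonicOrthogonal (φ ∘ₗ LinearMap.mulLeft K (nodal univ μ)) σ)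
    (hψ : ∀ p, φ (nodal univ μ * (p * p)) = 0 → p = 0) (n : ℕ) :
    (christoffelMatrix (fun j => π (n + j)) μ).det =
      C (Matrix.of fun i j : Fin ℓ => (π (n + j)).eval (μ i)).det * (nodal univ μ * σ n) := by
  obtain ⟨c, hc_last, hD⟩ := exists_det_christoffelMatrix_eq_sum (fun j => π (n + j)) μ
  obtain ⟨q, hq⟩ := nodal_dvd_of_eval_eq_zero (s := univ) hμ.injOn
    fun i _ => eval_det_christoffelMatrix_node (fun j => π (n + j)) μ i
  set D := (christoffelMatrix (fun j => π (n + j)) μ).det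
  set Δ := (Matrix.of fun i j : Fin ℓ => (π (n + j)).eval (μ i)).det
  have hPdeg : (nodal univ μ).natDegree = ℓ := by simp [natDegree_nodal]
  have hDdeg : D.natDegree ≤ n + ℓ := by
    have hmem : D ∈ degreeLT K (n + ℓ + 1) := hD ▸ hπ.sum_smul_mem_degreeLT n c
    rwa [degreeLT_succ_eq_degreeLE, mem_degreeLE, ← natDegree_le_iff_degree_le] at hmem
  have hqdeg : q.natDegree ≤ n := by
    rcases eq_or_ne q 0 with rfl | hq0
    · simp
    · rw [hq, nodal_monic.natDegree_mul' hq0, hPdeg] at hDdeg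
      omega
  have hqcoeff : q.coeff n = Δ := by
    have hDcoeff := coeff_mul_add_eq_of_natDegree_le hPdeg.le hqdeg
    have hPcoeff : (nodal univ μ).coeff ℓ = 1 := by
      simpa [hPdeg] using (nodal_monic (s := univ) (v := μ)).coeff_natDegree
    rw [← hq, hPcoeff, one_mul, add_comm, hD, hπ.coeff_sum_smul_last, hc_last] at hDcoeff
    simpa [Δ] using hDcoeff.symm
  have hqσ : q = C (q.coeff n) * σ n := by
    refine hσ.eq_C_coeff_mul hψ (degree_le_of_natDegree_le hqdeg) fun s hs => ?_
    rw [LinearMap.comp_apply, LinearMap.mulLeft_apply,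
      show nodal univ μ * (s * q) = s * D by rw [hq]; ring, hD]
    exact hπ.apply_mul_sum_smul_eq_zero hs c
  rw [hq, hqσ, hqcoeff]
  ring

end Core

section Measure

variable {α : Measure ℝ}

theorem integrable_eval_of_compact [IsFiniteMeasure α] {S : Set ℝ} (hS : IsCompact S)
    (hαS : α Sᶜ = 0) (p : ℝ[X]) : Integrable (fun t => p.eval t) α := by
  obtain ⟨M, hM⟩ := hS.exists_bound_of_continuousOn p.continuous.continuousOn
  exact ⟨p.continuous.aestronglyMeasurable,
    HasFiniteIntegral.of_bounded (C := M) ((ae_iff.mpr hαS).mono fun t ht => hM t ht)⟩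

noncomputable def polyIntegral (α : Measure ℝ)
    (hα : ∀ p : ℝ[X], Integrable (fun t => p.eval t) α) : ℝ[X] →ₗ[ℝ] ℝ where
  toFun p := ∫ t, p.eval t ∂α
  map_add' p q := by simpa only [eval_add] using integral_add (hα p) (hα q)
  map_smul' a p := by
    simpa only [eval_smul, smul_eq_mul, RingHom.id_apply] using integral_const_mul a _

theorem polyIntegral_apply (hα : ∀ p : ℝ[X], Integrable (fun t => p.eval t) α) (p : ℝ[X]) :
    polyIntegral α hα p = ∫ t, p.eval t ∂α := rfl

theorem prod_sub_eq_neg_one_pow_mul_eval_nodal {ℓ : ℕ} (μ : Fin ℓ → ℝ) (t : ℝ) :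
    ∏ j, (μ j - t) = (-1) ^ ℓ * (nodal univ μ).eval t := by
  simp_rw [eval_nodal, ← neg_sub t, prod_neg, card_univ, Fintype.card_fin]

theorem neg_one_pow_mul_polyIntegral_nodal_mul
    (hα : ∀ p : ℝ[X], Integrable (fun t => p.eval t) α) {ℓ : ℕ} (μ : Fin ℓ → ℝ) (p : ℝ[X]) :
    (-1) ^ ℓ * polyIntegral α hα (nodal univ μ * p) = ∫ t, (∏ j, (μ j - t)) * p.eval t ∂α := by
  simp [polyIntegral_apply, prod_sub_eq_neg_one_pow_mul_eval_nodal, mul_assoc,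
    ← integral_const_mul]

theorem integral_withDensity_ofReal {X : Type*} [MeasurableSpace X] {μ : Measure X}
    {w : X → ℝ} (hw : Measurable w) (hw0 : ∀ᵐ x ∂μ, 0 ≤ w x) (g : X → ℝ) :
    ∫ x, g x ∂μ.withDensity (fun x => ENNReal.ofReal (w x)) = ∫ x, w x * g x ∂μ := by
  rw [integral_withDensity_eq_integral_toReal_smul hw.ennreal_ofReal
    (ae_of_all _ fun _ => ENNReal.ofReal_lt_top)]
  refine integral_congr_ae (hw0.mono fun x hx => ?_)
  simp [ENNReal.toReal_ofReal hx]

theorem integral_mul_sq_pos {X : Type*} [MeasurableSpace X] {μ : Measure X} {w f : X → ℝ}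
    {c : ℝ} (hc : 0 < c) (hcw : ∀ᵐ x ∂μ, c ≤ w x) (hf : Integrable (fun x => f x ^ 2) μ)
    (hwf : Integrable (fun x => w x * f x ^ 2) μ) (hpos : 0 < ∫ x, f x ^ 2 ∂μ) :
    0 < ∫ x, w x * f x ^ 2 ∂μ :=
  calc 0 < c * ∫ x, f x ^ 2 ∂μ := mul_pos hc hpos
    _ = ∫ x, c * f x ^ 2 ∂μ := (integral_const_mul c _).symm
    _ ≤ ∫ x, w x * f x ^ 2 ∂μ := integral_mono_ae (hf.const_mul c) hwf <|
        hcw.mono fun _ hx => mul_le_mul_of_nonneg_right hx (sq_nonneg _)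

theorem eq_zero_of_polyIntegral_nodal_mul_self_eq_zero
    (hα : ∀ p : ℝ[X], Integrable (fun t => p.eval t) α)
    (hposdef : ∀ p : ℝ[X], p ≠ 0 → 0 < ∫ t, (p.eval t) ^ 2 ∂α) {ℓ : ℕ} {μ : Fin ℓ → ℝ}
    {c : ℝ} (hc : 0 < c) (hcμ : ∀ᵐ t ∂α, c ≤ ∏ j, (μ j - t)) {p : ℝ[X]}
    (hp : polyIntegral α hα (nodal univ μ * (p * p)) = 0) : p = 0 := by
  by_contra hp0
  have hpos := integral_mul_sq_pos hc hcμ (by simpa [sq] using hα (p * p))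
    (by simpa [prod_sub_eq_neg_one_pow_mul_eval_nodal, sq, mul_assoc] using
      (hα (nodal univ μ * (p * p))).const_mul ((-1) ^ ℓ))
    (hposdef p hp0)
  simp only [sq, ← eval_mul, ← neg_one_pow_mul_polyIntegral_nodal_mul hα, hp, mul_zero] at hpos
  exact hpos.false

end Measure

end Christoffel

open Christoffel in
/-- Christoffel's formula: the monic orthogonal polynomial for the modified measure
`∏_j (μ_j - t) dα(t)` expressed as a ratio of determinants of the original monic
orthogonal polynomials. -/
theorem christoffel_formula (α : Measure ℝ) [IsFiniteMeasure α] (Q : ℝ)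
    (hQ : α (Set.Icc (-Q) Q)ᶜ = 0)
    (hposdef : ∀ p : Polynomial ℝ, p ≠ 0 → 0 < ∫ t, (p.eval t) ^ 2 ∂α)
    (π : ℕ → Polynomial ℝ)
    (hmonic : ∀ j, (π j).Monic) (hdeg : ∀ j, (π j).natDegree = j)
    (horth : ∀ j k, j ≠ k → ∫ t, (π j).eval t * (π k).eval t ∂α = 0)
    (ℓ : ℕ) (μ : Fin ℓ → ℝ) (hμ : Function.Injective μ) (hμQ : ∀ i, Q < μ i)
    -- the modified measure dα^{[ℓ]}(t) = ∏_j (μ_j - t) dα(t)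
    (α' : Measure ℝ)
    (hα' : α' = α.withDensity (fun t => ENNReal.ofReal (∏ j, (μ j - t))))
    -- its monic orthogonal polynomials
    (π' : ℕ → Polynomial ℝ)
    (hmonic' : ∀ j, (π' j).Monic) (hdeg' : ∀ j, (π' j).natDegree = j)
    (horth' : ∀ j k, j ≠ k → ∫ t, (π' j).eval t * (π' k).eval t ∂α' = 0)
    (n : ℕ) (t : ℝ) (ht : ∀ i, t ≠ μ i) :
    (π' n).eval t =
      (1 / ∏ i, (t - μ i)) *
        ((Matrix.of fun i j : Fin (ℓ + 1) =>
            if h : (i : ℕ) < ℓ then (π (n + j)).eval (μ ⟨i, h⟩)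
            else (π (n + j)).eval t).det /
          (Matrix.of fun i j : Fin ℓ => (π (n + j)).eval (μ i)).det) := by
  have hint := integrable_eval_of_compact isCompact_Icc hQ
  set φ := polyIntegral α hint
  have hc : 0 < ∏ j, (μ j - Q) := prod_pos fun j _ => sub_pos.mpr (hμQ j)
  have hweight : ∀ᵐ s ∂α, ∏ j, (μ j - Q) ≤ ∏ j, (μ j - s) :=
    (ae_iff.mpr hQ).mono fun s hs => prod_le_prod (fun j _ => by linarith [hμQ j])
      fun j _ => by linarith [hs.2]
  have hmodified : ∀ p : ℝ[X], ∫ s, p.eval s ∂α' = (-1) ^ ℓ * φ (nodal univ μ * p) := fun p => by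
    rw [hα', integral_withDensity_ofReal (by fun_prop) (hweight.mono fun _ hs => hc.le.trans hs),
      neg_one_pow_mul_polyIntegral_nodal_mul]
  have hπ : IsMonicOrthogonal φ π :=
    ⟨hmonic, hdeg, fun j k hjk => by simpa [φ, polyIntegral_apply] using horth j k hjk⟩
  have hπ' : IsMonicOrthogonal (φ ∘ₗ LinearMap.mulLeft ℝ (nodal univ μ)) π' :=
    ⟨hmonic', hdeg', fun j k hjk => by simpa [← eval_mul, hmodified] using horth' j k hjk⟩
  have hψ : ∀ p, φ (nodal univ μ * (p * p)) = 0 → p = 0 := fun p =>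
    eq_zero_of_polyIntegral_nodal_mul_self_eq_zero hint hposdef hc hweight
  have hD := congrArg (eval t) (det_christoffelMatrix_eq_det_mul_nodal_mul hπ hμ hπ' hψ n)
  rw [eval_det_christoffelMatrix, eval_mul, eval_C, eval_mul, eval_nodal] at hD
  have hΔ := det_eval_nodes_ne_zero hπ hμ hψ n
  have hPt : ∏ i, (t - μ i) ≠ 0 := prod_ne_zero_iff.mpr fun i _ => sub_ne_zero.mpr (ht i)
  rw [hD]
  field_simp
end

section
/- Brezin–Hikami formula: the average of the product of L characteristic polynomials ∏_{j=1}^{L} ∏_{i=1}^{N}(μ_j − xᵢ) with respect to the unitary-ensemble eigenvalue measure Δ(x)²dα(x)/Z_N equals det(π_{N+j−1}(μᵢ))₁≤i,j≤L divided by the Vandermonde Δ(μ) = ∏_{i>j}(μᵢ − μ_j). -/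
open MeasureTheory Polynomial Finset Matrix

/-- The Vandermonde product `∏_{i>j} (x i - x j)`. -/
noncomputable def Vand {n : ℕ} (x : Fin n → ℝ) : ℝ :=
  ∏ i : Fin n, ∏ j ∈ Finset.Iio i, (x i - x j)

/-!
Multiplying the integrand by `Δ(μ)` turns it into `Δ(x) Δ(x, μ)`. Write both Vandermonde
products as determinants in the monic basis `π_k`. Expand `Δ(x) = det (π_j(x_i))` by Leibniz;
in `Δ(x, μ) = det (π_k(y_i))`, `y = (x, μ)`, each of the first `N` rows depends on a single
variable `x_i`, so against `∏ π_{τ i}(x_i)` the integral can be taken row by row. Orthogonality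
turns row `i` into `h_{τ i} e_{τ i}` with `h_j = ∫ π_j²`, so the matrix is block triangular with
determinant `sgn τ ∏ h_j · det (π_{N+j}(μ_i))`, and summing over `τ` gives
`N! ∏ h_j · det (π_{N+j}(μ_i))`. For `L = 0` the same computation gives `Z = N! ∏ h_j`.
-/

open Equiv

section Vandermonde

variable {N L n : ℕ}

theorem vand_eq_det_vandermonde (v : Fin n → ℝ) : Vand v = (vandermonde v).det := by
  rw [det_vandermonde, Vand, prod_sigma', prod_sigma']
  refine prod_nbij' (fun p => ⟨p.2, p.1⟩) (fun p => ⟨p.2, p.1⟩) ?_ ?_ ?_ ?_ ?_ <;> simp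

theorem vand_ne_zero {v : Fin n → ℝ} (hv : Function.Injective v) : Vand v ≠ 0 := by
  rw [vand_eq_det_vandermonde]
  exact det_vandermonde_ne_zero_iff.2 hv

theorem vand_eq_det_eval (π : ℕ → ℝ[X]) (hmonic : ∀ j, (π j).Monic)
    (hdeg : ∀ j, (π j).natDegree = j) (v : Fin n → ℝ) :
    Vand v = (of fun i j : Fin n => (π j).eval (v i)).det := by
  rw [vand_eq_det_vandermonde,
    det_eval_matrixOfPolynomials_eq_det_vandermonde v (fun j => π j) (fun j => hdeg j)
      (fun j => hmonic j)]

theorem vand_eq_sum_perm (π : ℕ → ℝ[X]) (hmonic : ∀ j, (π j).Monic)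
    (hdeg : ∀ j, (π j).natDegree = j) (v : Fin n → ℝ) :
    Vand v = ∑ τ : Perm (Fin n), (Perm.sign τ : ℝ) * ∏ i, (π (τ i)).eval (v i) := by
  rw [vand_eq_det_eval π hmonic hdeg, ← det_transpose, det_apply']
  rfl

theorem vand_snoc (w : Fin n → ℝ) (a : ℝ) :
    Vand (Fin.snoc w a) = Vand w * ∏ i, (a - w i) := by
  simp only [Vand, Fin.prod_univ_castSucc, Fin.Iio_castSucc, Fin.Iio_last_eq_map, prod_map,
    Fin.coe_castSuccEmb, Fin.snoc_castSucc, Fin.snoc_last]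

theorem vand_append (x : Fin N → ℝ) (μ : Fin L → ℝ) :
    Vand (Fin.append x μ) = Vand x * Vand μ * ∏ j, ∏ i, (μ j - x i) := by
  induction L with
  | zero => simp [Vand, Fin.append_right_nil x μ rfl]
  | succ L ih =>
    rw [← Fin.snoc_init_self μ, Fin.append_snoc, vand_snoc, vand_snoc, ih,
      Fin.prod_univ_castSucc]
    -- `Fin.append_snoc` produces `Fin (N.add L + 1)`, which `rw` does not match with `Fin (N + L)`
    erw [Fin.prod_univ_add]
    simp only [Fin.append_left, Fin.append_right, Fin.snoc_castSucc, Fin.snoc_last]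
    ring

theorem vand_append_eq_det_fromRows (π : ℕ → ℝ[X]) (hmonic : ∀ j, (π j).Monic)
    (hdeg : ∀ j, (π j).natDegree = j) (x : Fin N → ℝ) (μ : Fin L → ℝ) :
    Vand (Fin.append x μ) =
      (fromRows (of fun i k => (π (finSumFinEquiv k)).eval (x i))
        (of fun j k => (π (finSumFinEquiv k)).eval (μ j))).det := by
  rw [vand_eq_det_eval π hmonic hdeg, ← det_reindex_self finSumFinEquiv.symm]
  congr 1
  ext (i | j) k <;> simp

end Vandermonde

section IntegrateRows

variable {X R : Type*} {n m : Type*} [Fintype n] [DecidableEq n] [Fintype m]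
  [DecidableEq m]

theorem det_fromRows_eq_sum [CommRing R] (A : Matrix n (n ⊕ m) R) (C : Matrix m (n ⊕ m) R) :
    (fromRows A C).det =
      ∑ σ : Perm (n ⊕ m),
        (Perm.sign σ : R) * ((∏ i, A i (σ (.inl i))) * ∏ j, C j (σ (.inr j))) := by
  rw [← det_transpose, det_apply']
  simp [Fintype.prod_sum_type]

theorem prod_mul_det_fromRows_eq_sum [CommRing R] (f : n → X → R) (g : X → n ⊕ m → R)
    (C : Matrix m (n ⊕ m) R) (x : n → X) :
    (∏ i, f i (x i)) * (fromRows (of fun i => g (x i)) C).det =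
      ∑ σ : Perm (n ⊕ m), ((Perm.sign σ : R) * ∏ j, C j (σ (.inr j))) *
        ∏ i, f i (x i) * g (x i) (σ (.inl i)) := by
  rw [det_fromRows_eq_sum, mul_sum]
  refine sum_congr rfl fun σ _ => ?_
  simp only [of_apply, prod_mul_distrib]
  ring

variable [MeasurableSpace X] (α : Measure X) [SigmaFinite α]

theorem integrable_prod_mul_det_fromRows (f : n → X → ℝ) (g : X → n ⊕ m → ℝ)
    (C : Matrix m (n ⊕ m) ℝ) (hfg : ∀ i k, Integrable (fun t => f i t * g t k) α) :
    Integrable (fun x : n → X => (∏ i, f i (x i)) * (fromRows (of fun i => g (x i)) C).det)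
      (Measure.pi fun _ => α) := by
  simp_rw [prod_mul_det_fromRows_eq_sum]
  exact integrable_finsetSum _ fun σ _ =>
    (Integrable.fintype_prod fun i => hfg i (σ (.inl i))).const_mul _

theorem integral_prod_mul_det_fromRows (f : n → X → ℝ) (g : X → n ⊕ m → ℝ)
    (C : Matrix m (n ⊕ m) ℝ) (hfg : ∀ i k, Integrable (fun t => f i t * g t k) α) :
    ∫ x : n → X, (∏ i, f i (x i)) * (fromRows (of fun i => g (x i)) C).det
        ∂(Measure.pi fun _ => α) =
      (fromRows (of fun i k => ∫ t, f i t * g t k ∂α) C).det := by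
  simp_rw [prod_mul_det_fromRows_eq_sum]
  rw [integral_finsetSum _ fun σ _ =>
    (Integrable.fintype_prod fun i => hfg i (σ (.inl i))).const_mul _, det_fromRows_eq_sum]
  refine sum_congr rfl fun σ _ => ?_
  rw [integral_const_mul, integral_fintype_prod_eq_prod fun i t => f i t * g t (σ (.inl i))]
  simp only [of_apply]
  ring

end IntegrateRows

section OrthogonalPolynomials

variable (α : Measure ℝ) {π : ℕ → ℝ[X]} {N L : ℕ}

theorem integral_eval_mul_eval_eq_ite
    (horth : ∀ j k, j ≠ k → ∫ t, (π j).eval t * (π k).eval t ∂α = 0) (j k : ℕ) :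
    ∫ t, (π j).eval t * (π k).eval t ∂α = if j = k then ∫ t, (π j).eval t ^ 2 ∂α else 0 := by
  split_ifs with h
  · simp [h, sq]
  · exact horth j k h

theorem of_integral_eval_mul_eval_eq_fromCols
    (horth : ∀ j k, j ≠ k → ∫ t, (π j).eval t * (π k).eval t ∂α = 0) (τ : Perm (Fin N)) :
    (of fun i (k : Fin N ⊕ Fin L) =>
        ∫ t, (π (τ i)).eval t * (π (finSumFinEquiv k)).eval t ∂α) =
      fromCols ((diagonal fun j : Fin N => ∫ t, (π j).eval t ^ 2 ∂α).submatrix τ id) 0 := by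
  ext i (j | j) <;>
    simp [integral_eval_mul_eval_eq_ite α horth, diagonal_apply, Fin.val_inj]
  exact if_neg (by omega)

variable [SigmaFinite α]

theorem integral_vand_mul_vand_append (hmonic : ∀ j, (π j).Monic)
    (hdeg : ∀ j, (π j).natDegree = j)
    (horth : ∀ j k, j ≠ k → ∫ t, (π j).eval t * (π k).eval t ∂α = 0)
    (hL2 : ∀ j, MemLp (fun t => (π j).eval t) 2 α) (μ : Fin L → ℝ) :
    ∫ x : Fin N → ℝ, Vand x * Vand (Fin.append x μ) ∂(Measure.pi fun _ => α) =
      N.factorial * (∏ j : Fin N, ∫ t, (π j).eval t ^ 2 ∂α) *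
        (of fun i j : Fin L => (π (N + j)).eval (μ i)).det := by
  set h : Fin N → ℝ := fun j => ∫ t, (π j).eval t ^ 2 ∂α
  set D := of fun i j : Fin L => (π (N + j)).eval (μ i)
  have hmul_int (j k : ℕ) : Integrable (fun t => (π j).eval t * (π k).eval t) α :=
    (hL2 j).integrable_mul (hL2 k)
  have expand (x : Fin N → ℝ) : Vand x * Vand (Fin.append x μ) =
      ∑ τ : Perm (Fin N), (Perm.sign τ : ℝ) * ((∏ i, (π (τ i)).eval (x i)) *
        (fromRows (of fun i k => (π (finSumFinEquiv k)).eval (x i))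
          (of fun j k => (π (finSumFinEquiv k)).eval (μ j))).det) := by
    rw [vand_eq_sum_perm π hmonic hdeg, vand_append_eq_det_fromRows π hmonic hdeg, sum_mul]
    simp only [mul_assoc]
  have bottom : (of fun j (k : Fin N ⊕ Fin L) => (π (finSumFinEquiv k)).eval (μ j)) =
      fromCols (of fun (j : Fin L) (k : Fin N) => (π k).eval (μ j)) D := by
    ext j (k | k) <;> simp [D]
  have term (τ : Perm (Fin N)) :
      ∫ x : Fin N → ℝ, (∏ i, (π (τ i)).eval (x i)) *
        (fromRows (of fun i k => (π (finSumFinEquiv k)).eval (x i))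
          (of fun j k => (π (finSumFinEquiv k)).eval (μ j))).det ∂(Measure.pi fun _ => α) =
        Perm.sign τ * (∏ j, h j) * D.det := by
    rw [integral_prod_mul_det_fromRows α _ (fun t k => (π (finSumFinEquiv k)).eval t) _
        fun i k => hmul_int _ _, of_integral_eval_mul_eval_eq_fromCols α horth, bottom,
      fromRows_fromCols_eq_fromBlocks, det_fromBlocks_zero₁₂, det_permute, det_diagonal]
  simp_rw [expand]
  rw [integral_finsetSum _ fun τ _ => (integrable_prod_mul_det_fromRows α _
    (fun t k => (π (finSumFinEquiv k)).eval t) _ fun i k => hmul_int _ _).const_mul _]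
  simp_rw [integral_const_mul, term, ← mul_assoc, ← Int.cast_mul, ← Units.val_mul,
    Int.units_mul_self]
  simp [Fintype.card_perm, mul_assoc]

end OrthogonalPolynomials

theorem brezin_hikami_formula_general (α : Measure ℝ) [IsFiniteMeasure α]
    (hposdef : ∀ p : Polynomial ℝ, p ≠ 0 → 0 < ∫ t, (p.eval t) ^ 2 ∂α)
    (π : ℕ → Polynomial ℝ)
    (hmonic : ∀ j, (π j).Monic) (hdeg : ∀ j, (π j).natDegree = j)
    (horth : ∀ j k, j ≠ k → ∫ t, (π j).eval t * (π k).eval t ∂α = 0)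
    (L N : ℕ) (μ : Fin L → ℝ) (hμ : Function.Injective μ)
    (Z : ℝ)
    (hZ : Z = ∫ x : Fin N → ℝ, (Vand x) ^ 2 ∂(Measure.pi fun _ => α)) :
    (1 / Z) * ∫ x : Fin N → ℝ, (∏ j : Fin L, ∏ i, (μ j - x i)) * (Vand x) ^ 2
        ∂(Measure.pi fun _ => α)
      = (Matrix.of fun i j : Fin L => (π (N + j)).eval (μ i)).det / Vand μ := by
  have hnorm (j : ℕ) : 0 < ∫ t, (π j).eval t ^ 2 ∂α := hposdef _ (hmonic j).ne_zero
  have hL2 (j : ℕ) : MemLp (fun t => (π j).eval t) 2 α :=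
    (memLp_two_iff_integrable_sq (π j).continuous.aestronglyMeasurable).2
      (Integrable.of_integral_ne_zero (hnorm j).ne')
  have hZ' : Z = N.factorial * ∏ j : Fin N, ∫ t, (π j).eval t ^ 2 ∂α := by
    have hVand_nil : Vand ![] = 1 := prod_empty
    simpa [hZ, vand_append, hVand_nil, sq] using
      integral_vand_mul_vand_append α hmonic hdeg horth hL2 (N := N) ![]
  have integrand (x : Fin N → ℝ) : (∏ j, ∏ i, (μ j - x i)) * Vand x ^ 2 =
      (Vand μ)⁻¹ * (Vand x * Vand (Fin.append x μ)) := by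
    rw [vand_append]
    field_simp [vand_ne_zero hμ]
  simp_rw [integrand]
  rw [integral_const_mul, integral_vand_mul_vand_append α hmonic hdeg horth hL2, hZ']
  have hprod : ∏ j : Fin N, ∫ t, (π j).eval t ^ 2 ∂α ≠ 0 :=
    (prod_pos fun (j : Fin N) _ => hnorm j).ne'
  field_simp

/-- Brezin–Hikami formula: the average of a product of `L` characteristic polynomials
equals `det(π_{N+j-1}(μ_i)) / Δ(μ)`. -/
theorem brezin_hikami_formula (α : Measure ℝ) [IsFiniteMeasure α] (Q : ℝ)
    (hQ : α (Set.Icc (-Q) Q)ᶜ = 0)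
    (hposdef : ∀ p : Polynomial ℝ, p ≠ 0 → 0 < ∫ t, (p.eval t) ^ 2 ∂α)
    (π : ℕ → Polynomial ℝ)
    (hmonic : ∀ j, (π j).Monic) (hdeg : ∀ j, (π j).natDegree = j)
    (horth : ∀ j k, j ≠ k → ∫ t, (π j).eval t * (π k).eval t ∂α = 0)
    (L N : ℕ) (μ : Fin L → ℝ) (hμ : Function.Injective μ) (hμQ : ∀ i, Q < μ i)
    (Z : ℝ)
    (hZ : Z = ∫ x : Fin N → ℝ, (Vand x) ^ 2 ∂(Measure.pi fun _ => α)) :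
    (1 / Z) * ∫ x : Fin N → ℝ, (∏ j : Fin L, ∏ i, (μ j - x i)) * (Vand x) ^ 2
        ∂(Measure.pi fun _ => α)
      = (Matrix.of fun i j : Fin L => (π (N + j)).eval (μ i)).det / Vand μ :=
  brezin_hikami_formula_general α hposdef π hmonic hdeg horth L N μ hμ Z hZ
end

section
/- Corollary of Christoffel's formula: the product ∏_{j=0}^{ℓ} π_n^{[j]}(μ_{j+1}) of monic orthogonal polynomials with respect to the successive measures dα^{[j]}(t) = (μ_j − t)⋯(μ₁ − t)dα(t), evaluated at the next point μ_{j+1}, equals det(π_{n+j−1}(μᵢ))₁≤i,j≤ℓ+1 divided by the Vandermonde determinant Δ(μ) of μ₁,…,μ_{ℓ+1}. -/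
open MeasureTheory Polynomial Finset Matrix

/-!
Expanding `det (π_{n+j}(x_0, …, x_{m-1}, y))` along its last row gives a polynomial `E` in `y`,
a combination of `π_n, …, π_{n+m}` with top coefficient `D = det (π_{n+j}(x_i))_{i,j<m}`. So `E`
is `α`-orthogonal to all polynomials of degree `< n`, and it vanishes at every `x_i`, hence
`E = W * G` with `W = ∏ (X - x_i)`. As `∏ (x_i - t) = ± W(t)`, the quotient `G` is orthogonal to
degree `< n` for the modified measure, and comparing it with the monic orthogonal polynomial `p`
of that measure gives Christoffel's formula `E = W * D • p`. Evaluating at `y = x_m` yields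
`D_{m+1} = p(x_m) * D_m * ∏_{k<m} (x_m - x_k)`, and induction on `m` gives
`det = (∏ π_n^{[j]}(μ_j)) * Vand μ`.
-/

theorem Continuous.integrable_of_ae_mem_isCompact {X E : Type*} [TopologicalSpace X]
    [T2Space X] [MeasurableSpace X] [OpensMeasurableSpace X] [NormedAddCommGroup E]
    {β : Measure X} [IsFiniteMeasure β] {K : Set X} (hK : IsCompact K) (hβ : ∀ᵐ t ∂β, t ∈ K)
    {f : X → E} (hf : Continuous f) : Integrable f β := by
  rw [← Measure.restrict_eq_self_of_ae_mem hβ]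
  exact hf.continuousOn.integrableOn_compact hK

theorem integral_withDensity_ofReal_eq_integral_mul {X : Type*} [MeasurableSpace X]
    {α : Measure X} {w : X → ℝ} (hw : Measurable w) (hw₀ : ∀ᵐ t ∂α, 0 ≤ w t) (f : X → ℝ) :
    ∫ t, f t ∂(α.withDensity fun t => ENNReal.ofReal (w t)) = ∫ t, w t * f t ∂α := by
  rw [integral_withDensity_eq_integral_toReal_smul hw.ennreal_ofReal
    (ae_of_all _ fun _ => ENNReal.ofReal_lt_top)]
  refine integral_congr_ae ?_
  filter_upwards [hw₀] with t ht
  simp [ENNReal.toReal_ofReal ht]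

theorem integral_mul_sq_pos {X : Type*} [MeasurableSpace X] {α : Measure X} {w f : X → ℝ}
    {c : ℝ} (hc : 0 < c) (hw : ∀ᵐ t ∂α, c ≤ w t) (hf : Integrable (fun t => f t ^ 2) α)
    (hwf : Integrable (fun t => w t * f t ^ 2) α) (hpos : 0 < ∫ t, f t ^ 2 ∂α) :
    0 < ∫ t, w t * f t ^ 2 ∂α :=
  calc 0 < c * ∫ t, f t ^ 2 ∂α := mul_pos hc hpos
    _ = ∫ t, c * f t ^ 2 ∂α := (integral_const_mul c _).symm
    _ ≤ ∫ t, w t * f t ^ 2 ∂α := integral_mono_ae (hf.const_mul c) hwf <| by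
        filter_upwards [hw] with t ht using mul_le_mul_of_nonneg_right ht (sq_nonneg _)

def Polynomial.Sequence.ofMonic {R : Type*} [Semiring R] [Nontrivial R] (q : ℕ → R[X])
    (hq : ∀ k, (q k).Monic) (hqd : ∀ k, (q k).natDegree = k) : Sequence R :=
  ⟨q, fun k => by rw [degree_eq_natDegree (hq k).ne_zero, hqd]⟩

theorem Polynomial.Sequence.integral_eval_mul_eq_zero_of_degree_lt {β : Measure ℝ}
    (S : Sequence ℝ) (hint : ∀ p : ℝ[X], Integrable (fun t => p.eval t) β)
    (horth : ∀ j k, j ≠ k → ∫ t, (S j).eval t * (S k).eval t ∂β = 0)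
    {m : ℕ} {r : ℝ[X]} (hr : r.degree < m) : ∫ t, r.eval t * (S m).eval t ∂β = 0 := by
  have hmem : r ∈ Submodule.span ℝ (S '' Set.Iio m) := by
    rw [S.span_degreeLT fun i _ => by simp [S.ne_zero i]]
    exact mem_degreeLT.2 hr
  clear hr
  have hint' (p : ℝ[X]) : Integrable (fun t => p.eval t * (S m).eval t) β := by
    simpa using hint (p * S m)
  induction hmem using Submodule.span_induction with
  | mem p hp =>
    obtain ⟨j, hj, rfl⟩ := hp
    exact horth j m (Set.mem_Iio.1 hj).ne
  | zero => simp
  | add p q _ _ hp hq =>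
    simp only [eval_add, add_mul]
    rw [integral_add (hint' p) (hint' q), hp, hq, add_zero]
  | smul a p _ hp =>
    simp only [eval_smul, smul_eq_mul, mul_assoc]
    rw [integral_const_mul, hp, mul_zero]

theorem Polynomial.Sequence.integral_mul_eval_mul_eq_zero_of_degree_lt {α : Measure ℝ}
    [IsFiniteMeasure α] {K : Set ℝ} (hK : IsCompact K) (hα : ∀ᵐ t ∂α, t ∈ K) {w : ℝ → ℝ}
    (hw : Continuous w) (hw₀ : ∀ᵐ t ∂α, 0 ≤ w t) (S : Sequence ℝ)
    (horth : ∀ j k, j ≠ k →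
      ∫ t, (S j).eval t * (S k).eval t ∂(α.withDensity fun t => ENNReal.ofReal (w t)) = 0)
    {n : ℕ} {r : ℝ[X]} (hr : r.degree < n) :
    ∫ t, w t * (r.eval t * (S n).eval t) ∂α = 0 := by
  have := isFiniteMeasure_withDensity_ofReal (hw.integrable_of_ae_mem_isCompact hK hα).2
  have hα' := (withDensity_absolutelyContinuous α fun t => ENNReal.ofReal (w t)).ae_le hα
  rw [← integral_withDensity_ofReal_eq_integral_mul hw.measurable hw₀]
  exact S.integral_eval_mul_eq_zero_of_degree_lt
    (fun p => p.continuous.integrable_of_ae_mem_isCompact hK hα') horth hr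

theorem eq_zero_of_integral_mul_eq_zero_of_degree_lt {α : Measure ℝ} {w : ℝ → ℝ}
    (hpos : ∀ r : ℝ[X], r ≠ 0 → 0 < ∫ t, w t * r.eval t ^ 2 ∂α) {n : ℕ} {s : ℝ[X]}
    (hs : s.degree < n)
    (horth : ∀ r : ℝ[X], r.degree < n → ∫ t, w t * (r.eval t * s.eval t) ∂α = 0) :
    s = 0 := by
  by_contra hs0
  have := hpos s hs0
  simp only [sq, horth s hs, lt_irrefl] at this

theorem Polynomial.degree_sub_coeff_smul_lt {R : Type*} [CommRing R] {G p : R[X]} {n : ℕ}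
    (hG : G.natDegree ≤ n) (hp : p.Monic) (hpd : p.natDegree = n) :
    (G - G.coeff n • p).degree < n := by
  refine (degree_lt_iff_coeff_zero _ _).2 fun k hk => ?_
  rcases hk.eq_or_lt with rfl | hk
  · rw [coeff_sub, coeff_smul, ← hpd, hp.coeff_natDegree, smul_eq_mul, mul_one, sub_self]
  · rw [coeff_sub, coeff_smul, coeff_eq_zero_of_natDegree_lt (hG.trans_lt hk),
      coeff_eq_zero_of_natDegree_lt (hpd.trans_lt hk), smul_zero, sub_zero]

theorem prod_sub_eq_neg_one_pow_mul_eval {m : ℕ} (x : Fin m → ℝ) (t : ℝ) :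
    ∏ k, (x k - t) = (-1) ^ m * (∏ k, (X - C (x k))).eval t := by
  have hneg : ∏ k, (x k - t) = ∏ k, -(t - x k) := by simp
  rw [hneg, prod_neg, card_univ, Fintype.card_fin, eval_prod]
  simp

theorem Fin.prod_Iio_last {M : Type*} [CommMonoid M] {m : ℕ} (f : Fin (m + 1) → M) :
    ∏ k ∈ Iio (Fin.last m), f k = ∏ k, f (Fin.castSucc k) := by
  rw [Fin.Iio_last_eq_map, prod_map]
  rfl

theorem Vand_succ {m : ℕ} (ν : Fin (m + 1) → ℝ) :
    Vand ν = Vand (Fin.init ν) * ∏ k, (ν (Fin.last m) - Fin.init ν k) := by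
  simp only [Vand, Fin.prod_univ_castSucc, Fin.prod_Iio_last, Fin.prod_Iio_castSucc]
  rfl

theorem Vand_ne_zero {m : ℕ} {ν : Fin m → ℝ} (hν : Function.Injective ν) : Vand ν ≠ 0 :=
  prod_ne_zero_iff.2 fun _ _ => prod_ne_zero_iff.2 fun _ hj =>
    sub_ne_zero.2 (hν.ne (mem_Iio.1 hj).ne')

section evalMatrix

variable (π : ℕ → ℝ[X]) (n : ℕ) {m : ℕ}

def evalMatrix (x : Fin m → ℝ) : Matrix (Fin m) (Fin m) ℝ :=
  of fun i j => (π (n + j)).eval (x i)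

/-- The Laplace expansion of `det (evalMatrix π n (Fin.snoc x y))` along its last row, read as a
polynomial in `y`. -/
noncomputable def detSnocPoly (x : Fin m → ℝ) : ℝ[X] :=
  ∑ j : Fin (m + 1),
    ((-1) ^ (m + j : ℕ) * (of fun i k => (π (n + j.succAbove k)).eval (x i)).det) • π (n + j)

variable {π n}

theorem eval_detSnocPoly (x : Fin m → ℝ) (y : ℝ) :
    (detSnocPoly π n x).eval y = (evalMatrix π n (Fin.snoc x y)).det := by
  rw [det_succ_row _ (Fin.last m), detSnocPoly, eval_finsetSum]
  refine Finset.sum_congr rfl fun j _ => ?_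
  simp only [eval_smul, smul_eq_mul, evalMatrix, of_apply, Fin.snoc_last, Fin.succAbove_last,
    submatrix, Fin.snoc_castSucc, Fin.val_last]
  ring

theorem detSnocPoly_eval_eq_zero (x : Fin m → ℝ) (k : Fin m) :
    (detSnocPoly π n x).eval (x k) = 0 := by
  rw [eval_detSnocPoly]
  refine det_zero_of_row_eq (Fin.castSucc_lt_last k).ne ?_
  ext j
  simp [evalMatrix]

theorem natDegree_detSnocPoly_le (hdeg : ∀ k, (π k).natDegree = k) (x : Fin m → ℝ) :
    (detSnocPoly π n x).natDegree ≤ n + m :=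
  natDegree_sum_le_of_forall_le _ _ fun j _ =>
    (natDegree_smul_le _ _).trans <| (hdeg _).le.trans <| by omega

theorem coeff_detSnocPoly (hmonic : ∀ k, (π k).Monic) (hdeg : ∀ k, (π k).natDegree = k)
    (x : Fin m → ℝ) : (detSnocPoly π n x).coeff (n + m) = (evalMatrix π n x).det := by
  rw [detSnocPoly, finsetSum_coeff, Finset.sum_eq_single (Fin.last m)]
  · have hlead := (hmonic (n + m)).coeff_natDegree
    rw [hdeg] at hlead
    simp [hlead, Fin.succAbove_last, evalMatrix, ← two_mul, pow_mul]
  · intro j _ hj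
    have := Fin.val_lt_last hj
    rw [coeff_smul, coeff_eq_zero_of_natDegree_lt (by rw [hdeg]; omega), smul_zero]
  · simp

theorem integral_eval_mul_detSnocPoly_eq_zero {α : Measure ℝ}
    (hint : ∀ p : ℝ[X], Integrable (fun t => p.eval t) α)
    (horth : ∀ (k : ℕ) (r : ℝ[X]), r.degree < k → ∫ t, r.eval t * (π k).eval t ∂α = 0)
    (x : Fin m → ℝ) {r : ℝ[X]} (hr : r.degree < n) :
    ∫ t, r.eval t * (detSnocPoly π n x).eval t ∂α = 0 := by
  simp only [detSnocPoly, eval_finsetSum, eval_smul, smul_eq_mul, Finset.mul_sum,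
    mul_left_comm (r.eval _)]
  rw [integral_finsetSum]
  · refine Finset.sum_eq_zero fun j _ => ?_
    rw [integral_const_mul, horth _ r (hr.trans_le (by exact_mod_cast Nat.le_add_right n j)),
      mul_zero]
  · intro j _
    exact Integrable.const_mul (by simpa using hint (r * π (n + j))) _

theorem exists_detSnocPoly_eq_prod_X_sub_C_mul (hmonic : ∀ k, (π k).Monic)
    (hdeg : ∀ k, (π k).natDegree = k) {x : Fin m → ℝ} (hx : Function.Injective x) :
    ∃ G : ℝ[X], detSnocPoly π n x = (∏ k, (X - C (x k))) * G ∧ G.natDegree ≤ n ∧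
      G.coeff n = (evalMatrix π n x).det := by
  set W : ℝ[X] := ∏ k, (X - C (x k))
  have hWm : W.Monic := monic_prod_of_monic _ _ fun k _ => monic_X_sub_C _
  have hWd : W.natDegree = m := by
    simp [W, natDegree_prod_of_monic _ _ fun k _ => monic_X_sub_C (x k)]
  obtain ⟨G, hG⟩ : W ∣ detSnocPoly π n x :=
    Finset.prod_dvd_of_coprime ((pairwise_coprime_X_sub_C hx).set_pairwise _)
      fun k _ => dvd_iff_isRoot.2 (detSnocPoly_eval_eq_zero x k)
  have hGd : G.natDegree ≤ n := by
    rcases eq_or_ne G 0 with rfl | hG0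
    · simp
    · have := natDegree_detSnocPoly_le (n := n) hdeg x
      rw [hG, hWm.natDegree_mul' hG0, hWd] at this
      omega
  refine ⟨G, hG, hGd, ?_⟩
  rw [← coeff_detSnocPoly hmonic hdeg x, hG, add_comm n m,
    coeff_mul_add_eq_of_natDegree_le hWd.le hGd, ← hWd, hWm.coeff_natDegree, one_mul]

theorem detSnocPoly_eq_prod_X_sub_C_mul_smul {α : Measure ℝ}
    (hint : ∀ p : ℝ[X], Integrable (fun t => p.eval t) α)
    (hmonic : ∀ k, (π k).Monic) (hdeg : ∀ k, (π k).natDegree = k)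
    (horth : ∀ (k : ℕ) (r : ℝ[X]), r.degree < k → ∫ t, r.eval t * (π k).eval t ∂α = 0)
    {x : Fin m → ℝ} (hx : Function.Injective x) {p : ℝ[X]} (hpm : p.Monic)
    (hpd : p.natDegree = n)
    (hpos : ∀ r : ℝ[X], r ≠ 0 → 0 < ∫ t, (∏ k, (x k - t)) * r.eval t ^ 2 ∂α)
    (hporth : ∀ r : ℝ[X], r.degree < n →
      ∫ t, (∏ k, (x k - t)) * (r.eval t * p.eval t) ∂α = 0) :
    detSnocPoly π n x = (∏ k, (X - C (x k))) * ((evalMatrix π n x).det • p) := by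
  obtain ⟨G, hG, hGd, hGc⟩ := exists_detSnocPoly_eq_prod_X_sub_C_mul hmonic hdeg hx
  have hint' (r q : ℝ[X]) :
      Integrable (fun t => (∏ k, (x k - t)) * (r.eval t * q.eval t)) α := by
    simp_rw [prod_sub_eq_neg_one_pow_mul_eval, mul_assoc, ← eval_mul]
    exact (hint _).const_mul _
  have hGorth (r : ℝ[X]) (hr : r.degree < n) :
      ∫ t, (∏ k, (x k - t)) * (r.eval t * G.eval t) ∂α = 0 := by
    have hE (t : ℝ) : (∏ k, (x k - t)) * (r.eval t * G.eval t)
        = (-1) ^ m * (r.eval t * (detSnocPoly π n x).eval t) := by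
      rw [prod_sub_eq_neg_one_pow_mul_eval, hG, eval_mul]
      ring
    simp_rw [hE]
    rw [integral_const_mul, integral_eval_mul_detSnocPoly_eq_zero hint horth x hr, mul_zero]
  suffices G - G.coeff n • p = 0 by rw [hG, ← hGc, ← sub_eq_zero.1 this]
  refine eq_zero_of_integral_mul_eq_zero_of_degree_lt hpos (degree_sub_coeff_smul_lt hGd hpm hpd)
    fun r hr => ?_
  simp only [eval_sub, eval_smul, smul_eq_mul, mul_sub, mul_left_comm _ (G.coeff n)]
  rw [integral_sub (hint' r G) ((hint' r p).const_mul _), integral_const_mul, hGorth r hr,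
    hporth r hr, mul_zero, sub_zero]

theorem det_evalMatrix_snoc {α : Measure ℝ}
    (hint : ∀ p : ℝ[X], Integrable (fun t => p.eval t) α)
    (hmonic : ∀ k, (π k).Monic) (hdeg : ∀ k, (π k).natDegree = k)
    (horth : ∀ (k : ℕ) (r : ℝ[X]), r.degree < k → ∫ t, r.eval t * (π k).eval t ∂α = 0)
    {x : Fin m → ℝ} (hx : Function.Injective x) (y : ℝ) {p : ℝ[X]} (hpm : p.Monic)
    (hpd : p.natDegree = n)
    (hpos : ∀ r : ℝ[X], r ≠ 0 → 0 < ∫ t, (∏ k, (x k - t)) * r.eval t ^ 2 ∂α)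
    (hporth : ∀ r : ℝ[X], r.degree < n →
      ∫ t, (∏ k, (x k - t)) * (r.eval t * p.eval t) ∂α = 0) :
    (evalMatrix π n (Fin.snoc x y)).det = p.eval y * (evalMatrix π n x).det * ∏ k, (y - x k) := by
  rw [← eval_detSnocPoly,
    detSnocPoly_eq_prod_X_sub_C_mul_smul hint hmonic hdeg horth hx hpm hpd hpos hporth]
  simp only [eval_mul, eval_smul, eval_prod, eval_sub, eval_X, eval_C, smul_eq_mul]
  ring

theorem det_evalMatrix_eq_prod_mul_Vand {α : Measure ℝ}
    (hint : ∀ p : ℝ[X], Integrable (fun t => p.eval t) α)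
    (hmonic : ∀ k, (π k).Monic) (hdeg : ∀ k, (π k).natDegree = k)
    (horth : ∀ (k : ℕ) (r : ℝ[X]), r.degree < k → ∫ t, r.eval t * (π k).eval t ∂α = 0)
    {ν : Fin m → ℝ} (hν : Function.Injective ν) {p : Fin m → ℝ[X]}
    (hpm : ∀ j, (p j).Monic) (hpd : ∀ j, (p j).natDegree = n)
    (hpos : ∀ j, ∀ r : ℝ[X], r ≠ 0 → 0 < ∫ t, (∏ k ∈ Iio j, (ν k - t)) * r.eval t ^ 2 ∂α)
    (hporth : ∀ j, ∀ r : ℝ[X], r.degree < n →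
      ∫ t, (∏ k ∈ Iio j, (ν k - t)) * (r.eval t * (p j).eval t) ∂α = 0) :
    (evalMatrix π n ν).det = (∏ j, (p j).eval (ν j)) * Vand ν := by
  induction m with
  | zero => simp [Vand]
  | succ m ih =>
    have hinit : Function.Injective (Fin.init ν) := hν.comp (Fin.castSucc_injective m)
    have hstep := det_evalMatrix_snoc hint hmonic hdeg horth hinit (ν (Fin.last m)) (hpm _)
      (hpd _) (by simpa only [Fin.prod_Iio_last, Fin.init] using hpos (Fin.last m))
      (by simpa only [Fin.prod_Iio_last, Fin.init] using hporth (Fin.last m))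
    rw [Fin.snoc_init_self] at hstep
    rw [hstep, ih hinit (fun j => hpm _) (fun j => hpd _)
      (fun j => by simpa only [Fin.prod_Iio_castSucc, Fin.init] using hpos (Fin.castSucc j))
      (fun j => by simpa only [Fin.prod_Iio_castSucc, Fin.init] using hporth (Fin.castSucc j)),
      Vand_succ, Fin.prod_univ_castSucc]
    simp only [Fin.init]
    ring

end evalMatrix

/-- Corollary of Christoffel's formula: `∏_{j=0}^{ℓ} π_n^{[j]}(μ_{j+1})`
equals `det(π_{n+j-1}(μ_i)) / Δ(μ)`. -/
theorem product_of_successive_orthopolys_eq_det (α : Measure ℝ) [IsFiniteMeasure α] (Q : ℝ)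
    (hQ : α (Set.Icc (-Q) Q)ᶜ = 0)
    (hposdef : ∀ p : Polynomial ℝ, p ≠ 0 → 0 < ∫ t, (p.eval t) ^ 2 ∂α)
    (π : ℕ → Polynomial ℝ)
    (hmonic : ∀ j, (π j).Monic) (hdeg : ∀ j, (π j).natDegree = j)
    (horth : ∀ j k, j ≠ k → ∫ t, (π j).eval t * (π k).eval t ∂α = 0)
    (ℓ : ℕ) (μ : Fin (ℓ + 1) → ℝ) (hμ : Function.Injective μ) (hμQ : ∀ i, Q < μ i)
    -- the modified measures dα^{[j]}(t) = ∏_{k<j} (μ_k - t) dα(t)  (dα^{[0]} = dα)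
    (αm : Fin (ℓ + 1) → Measure ℝ)
    (hαm : ∀ j, αm j = α.withDensity
      (fun t => ENNReal.ofReal (∏ k ∈ Finset.Iio j, (μ k - t))))
    -- πm j is the system of monic orthogonal polynomials for dα^{[j]}
    (πm : Fin (ℓ + 1) → ℕ → Polynomial ℝ)
    (hmonic' : ∀ j k, (πm j k).Monic) (hdeg' : ∀ j k, (πm j k).natDegree = k)
    (horth' : ∀ j, ∀ k l, k ≠ l →
      ∫ t, (πm j k).eval t * (πm j l).eval t ∂(αm j) = 0)
    (n : ℕ) :
    ∏ j : Fin (ℓ + 1), (πm j n).eval (μ j)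
      = (Matrix.of fun i j : Fin (ℓ + 1) => (π (n + j)).eval (μ i)).det / Vand μ := by
  have hsupp : ∀ᵐ t ∂α, t ∈ Set.Icc (-Q) Q := ae_iff.2 hQ
  have hint {f : ℝ → ℝ} (hf : Continuous f) : Integrable f α :=
    hf.integrable_of_ae_mem_isCompact isCompact_Icc hsupp
  have hweight_pos (j : Fin (ℓ + 1)) : 0 < ∏ k ∈ Iio j, (μ k - Q) :=
    prod_pos fun k _ => sub_pos.2 (hμQ k)
  have hweight (j : Fin (ℓ + 1)) :
      ∀ᵐ t ∂α, ∏ k ∈ Iio j, (μ k - Q) ≤ ∏ k ∈ Iio j, (μ k - t) := by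
    filter_upwards [hsupp] with t ht
    exact prod_le_prod (fun k _ => (sub_pos.2 (hμQ k)).le) fun k _ => by linarith [ht.2]
  have hπ (k : ℕ) (r : ℝ[X]) (hr : r.degree < k) : ∫ t, r.eval t * (π k).eval t ∂α = 0 :=
    (Sequence.ofMonic π hmonic hdeg).integral_eval_mul_eq_zero_of_degree_lt
      (fun p => hint p.continuous) horth hr
  have hπm (j : Fin (ℓ + 1)) (r : ℝ[X]) (hr : r.degree < n) :
      ∫ t, (∏ k ∈ Iio j, (μ k - t)) * (r.eval t * (πm j n).eval t) ∂α = 0 :=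
    (Sequence.ofMonic (πm j) (hmonic' j) (hdeg' j)).integral_mul_eval_mul_eq_zero_of_degree_lt
      isCompact_Icc hsupp (by fun_prop) ((hweight j).mono fun t => (hweight_pos j).le.trans)
      (hαm j ▸ horth' j) hr
  have hpos (j : Fin (ℓ + 1)) (r : ℝ[X]) (hr : r ≠ 0) :
      0 < ∫ t, (∏ k ∈ Iio j, (μ k - t)) * r.eval t ^ 2 ∂α :=
    integral_mul_sq_pos (hweight_pos j) (hweight j) (hint (by fun_prop)) (hint (by fun_prop))
      (hposdef r hr)
  exact eq_div_of_mul_eq (Vand_ne_zero hμ) (det_evalMatrix_eq_prod_mul_Vand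
    (fun p => hint p.continuous) hmonic hdeg hπ hμ (hmonic' · n) (hdeg' · n) hpos hπm).symm
end

section
/- Uvarov's formula (pure poles): for 0 ≤ m ≤ n, the n-th monic orthogonal polynomial π_n^{[0,m]} with respect to the measure dα(t)/∏_{j=1}^{m}(ε_j − t) equals the ratio of the (m+1)×(m+1) determinant with rows (h_{n−m}(εᵢ),…,h_n(εᵢ)) for i=1,…,m and last row (π_{n−m}(t),…,π_n(t)), divided by the m×m determinant det(h_{n−m+j−1}(εᵢ)), where h_k(ε) = (1/2πi)∫ π_k(t)dα(t)/(t−ε). -/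
/-!
Put `w(t) = ∏ⱼ (εⱼ - t)⁻¹`. A combination `p = ∑ⱼ cⱼ π_{n-m+j}` is `α`-orthogonal to all
polynomials of degree `< n - m`. If moreover its Cauchy transforms vanish at every `εᵢ`, then `p` is
`w α`-orthogonal to all polynomials `q` of degree `< n`: partial fractions give
`q w = r + ∑ᵢ Bᵢ / (εᵢ - t)` with `deg r < n - m`.

The cofactors of the last row of the numerator determinant are such coefficients (a determinant
with a repeated row vanishes), and the last of them is the denominator determinant. Hence the
expansion of the numerator along its last row is a polynomial of degree `n`, `w α`-orthogonal to
lower degrees, with leading coefficient the denominator, i.e. it is the denominator times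
`π_n^{[0,m]}`. The denominator is nonzero since a kernel vector would give a nonzero polynomial of
degree `< n` that is `w α`-orthogonal to itself. The factor `1/(2πi)` scales the first `m` rows of
both determinants and cancels.
-/

open MeasureTheory Polynomial Matrix

namespace Polynomial

theorem degree_sub_C_coeff_mul_lt {R : Type*} [Ring R] {p q : R[X]} {n : ℕ} (hq : q.Monic)
    (hqn : q.natDegree = n) (hp : p.degree ≤ n) : (p - C (p.coeff n) * q).degree < n := by
  rw [degree_lt_iff_coeff_zero]
  intro k hk
  rcases hk.eq_or_lt with rfl | hlt
  · rw [coeff_sub, coeff_C_mul, ← hqn, hq.coeff_natDegree, mul_one, sub_self]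
  · rw [coeff_sub, coeff_C_mul, coeff_eq_zero_of_degree_lt (hp.trans_lt (by exact_mod_cast hlt)),
      coeff_eq_zero_of_natDegree_lt (hqn ▸ hlt : q.natDegree < k), mul_zero, sub_zero]

theorem divByMonic_mem_degreeLT {R : Type*} [Ring R] {p q : R[X]} {k : ℕ} (hq : q.Monic)
    (hp : p ∈ degreeLT R (k + q.natDegree)) : p /ₘ q ∈ degreeLT R k := by
  nontriviality R
  rw [mem_degreeLT] at hp ⊢
  by_cases h0 : p /ₘ q = 0
  · simp [h0]
  have hqp : q.degree ≤ p.degree := not_lt.1 ((divByMonic_eq_zero_iff hq).not.1 h0)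
  have hp0 : p ≠ 0 := fun h => h0 (by simp [h])
  have hle : q.natDegree ≤ p.natDegree := natDegree_le_natDegree hqp
  rw [degree_eq_natDegree h0, natDegree_divByMonic _ hq, Nat.cast_lt]
  rw [degree_eq_natDegree hp0, Nat.cast_lt] at hp
  omega

def Sequence.ofMonic_s11 {R : Type*} [Semiring R] [Nontrivial R] (π : ℕ → R[X])
    (hmonic : ∀ j, (π j).Monic) (hdeg : ∀ j, (π j).natDegree = j) : Sequence R :=
  ⟨π, fun j => by rw [degree_eq_natDegree (hmonic j).ne_zero, hdeg]⟩

end Polynomial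

namespace Lagrange

theorem eval_div_nodal {F ι : Type*} [Field F] [DecidableEq ι] {s : Finset ι} {v : ι → F}
    (hvs : Set.InjOn v s) (q : F[X]) {x : F} (hx : ∀ i ∈ s, x ≠ v i) :
    q.eval x / (nodal s v).eval x = (q /ₘ nodal s v).eval x +
      ∑ i ∈ s, nodalWeight s v i * (x - v i)⁻¹ * (q %ₘ nodal s v).eval (v i) := by
  have hρ : (q %ₘ nodal s v).degree < s.card := by
    rw [← degree_nodal (v := v)]
    exact degree_modByMonic_lt _ nodal_monic
  have hnodal : (nodal s v).eval x ≠ 0 := eval_nodal_not_at_node hx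
  conv_lhs => rw [← modByMonic_add_div q (nodal s v), eq_interpolate hvs hρ]
  rw [eval_add, eval_mul, eval_interpolate_not_at_node _ hx]
  field_simp
  ring

end Lagrange

namespace Matrix

variable {R S : Type*} [CommRing R] [CommRing S] {m : ℕ}

def appendRow {n : Type*} (A : Matrix (Fin m) n R) (f : n → R) : Matrix (Fin (m + 1)) n R :=
  of fun i j => if hi : (i : ℕ) < m then A ⟨i, hi⟩ j else f j

def lastRowCofactor (A : Matrix (Fin m) (Fin (m + 1)) R) (j : Fin (m + 1)) : R :=
  (-1) ^ (m + j : ℕ) * (A.submatrix id j.succAbove).det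

theorem det_appendRow (A : Matrix (Fin m) (Fin (m + 1)) R) (f : Fin (m + 1) → R) :
    (A.appendRow f).det = ∑ j, f j * A.lastRowCofactor j := by
  rw [det_succ_row _ (Fin.last m)]
  refine Finset.sum_congr rfl fun j _ => ?_
  have hsub : (A.appendRow f).submatrix (Fin.last m).succAbove j.succAbove =
      A.submatrix id j.succAbove := by
    ext i k
    simp [appendRow]
  rw [hsub]
  simp [appendRow, lastRowCofactor]
  ring

theorem mulVec_lastRowCofactor (A : Matrix (Fin m) (Fin (m + 1)) R) :
    A *ᵥ A.lastRowCofactor = 0 := by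
  ext i
  rw [mulVec, dotProduct, ← det_appendRow, Pi.zero_apply]
  refine det_zero_of_row_eq (Fin.castSucc_lt_last i).ne ?_
  ext j
  simp [appendRow]

theorem lastRowCofactor_last (A : Matrix (Fin m) (Fin (m + 1)) R) :
    A.lastRowCofactor (Fin.last m) = (A.submatrix id Fin.castSucc).det := by
  simp [lastRowCofactor, ← two_mul]

theorem lastRowCofactor_smul_map (A : Matrix (Fin m) (Fin (m + 1)) R) (φ : R →+* S) (κ : S)
    (j : Fin (m + 1)) : (κ • A.map φ).lastRowCofactor j = κ ^ m * φ (A.lastRowCofactor j) := by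
  have hsub : (κ • A.map φ).submatrix id j.succAbove = κ • (A.submatrix id j.succAbove).map φ :=
    rfl
  rw [lastRowCofactor, lastRowCofactor, hsub, det_smul, Fintype.card_fin,
    ← RingHom.mapMatrix_apply, ← RingHom.map_det]
  simp only [map_mul, map_pow, map_neg, map_one]
  ring

theorem det_appendRow_smul_map (A : Matrix (Fin m) (Fin (m + 1)) R) (f : Fin (m + 1) → R)
    (φ : R →+* S) (κ : S) :
    ((κ • A.map φ).appendRow (φ ∘ f)).det = κ ^ m * φ (A.appendRow f).det := by
  simp only [det_appendRow, lastRowCofactor_smul_map, map_sum, map_mul, Finset.mul_sum,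
    Function.comp_apply]
  exact Finset.sum_congr rfl fun j _ => by ring

end Matrix

section CompactSupport

variable {μ : Measure ℝ} [IsFiniteMeasure μ] {K : Set ℝ}

theorem integrable_of_continuousOn_of_ae_mem (hK : IsCompact K) (hμK : ∀ᵐ x ∂μ, x ∈ K)
    {f : ℝ → ℝ} (hf : ContinuousOn f K) : Integrable f μ := by
  rw [← Measure.restrict_eq_self_of_ae_mem hμK]
  exact hf.integrableOn_compact hK

theorem integrable_eval_mul_inv_sub (hK : IsCompact K) (hμK : ∀ᵐ x ∂μ, x ∈ K) (p : ℝ[X])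
    {a : ℝ} (ha : a ∉ K) : Integrable (fun x => p.eval x * (x - a)⁻¹) μ :=
  integrable_of_continuousOn_of_ae_mem hK hμK <| p.continuous.continuousOn.mul <|
    (continuousOn_id.sub continuousOn_const).inv₀ fun _ hx =>
      sub_ne_zero.2 (ne_of_mem_of_not_mem hx ha)

end CompactSupport

theorem Polynomial.eq_zero_of_integral_eval_mul_self_eq_zero {μ : Measure ℝ}
    (hpos : ∀ p : ℝ[X], p ≠ 0 → 0 < ∫ t, (p.eval t) ^ 2 ∂μ) {p : ℝ[X]}
    (hp : ∫ x, p.eval x * p.eval x ∂μ = 0) : p = 0 := by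
  by_contra h
  simpa [sq, hp] using hpos p h

theorem integral_eval_sum_smul_mul {μ : Measure ℝ} {ι : Type*} (s : Finset ι) (c : ι → ℝ)
    (P : ι → ℝ[X]) {f : ℝ → ℝ} (hf : ∀ i ∈ s, Integrable (fun x => (P i).eval x * f x) μ) :
    ∫ x, (∑ i ∈ s, c i • P i).eval x * f x ∂μ = ∑ i ∈ s, c i * ∫ x, (P i).eval x * f x ∂μ := by
  simp only [eval_finsetSum, eval_smul, smul_eq_mul, Finset.sum_mul, mul_assoc]
  rw [integral_finsetSum _ fun i hi => (hf i hi).const_mul (c i)]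
  simp only [integral_const_mul]

theorem integral_pos_of_absolutelyContinuous {X : Type*} [MeasurableSpace X] {μ ν : Measure X}
    (hμν : μ ≪ ν) {f : X → ℝ} (hf : 0 ≤ f) (hfν : Integrable f ν) (hμ : 0 < ∫ x, f x ∂μ) :
    0 < ∫ x, f x ∂ν := by
  refine (integral_nonneg hf).lt_of_ne fun h => hμ.ne' ?_
  exact integral_eq_zero_of_ae (hμν.ae_le ((integral_eq_zero_iff_of_nonneg hf hfν).1 h.symm))

theorem integral_eval_mul_div_nodal_eq_zero {μ : Measure ℝ} [IsFiniteMeasure μ] {K : Set ℝ}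
    (hK : IsCompact K) (hμK : ∀ᵐ x ∂μ, x ∈ K) {ι : Type*} {s : Finset ι}
    {v : ι → ℝ} (hvs : Set.InjOn v s) (hvK : ∀ i ∈ s, v i ∉ K) {k : ℕ} {p q : ℝ[X]}
    (hp : ∀ r ∈ degreeLT ℝ k, ∫ x, p.eval x * r.eval x ∂μ = 0)
    (hpv : ∀ i ∈ s, ∫ x, p.eval x * (x - v i)⁻¹ ∂μ = 0) (hq : q ∈ degreeLT ℝ (k + s.card)) :
    ∫ x, p.eval x * (q.eval x / (Lagrange.nodal s v).eval x) ∂μ = 0 := by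
  classical
  set r := q /ₘ Lagrange.nodal s v
  set B : ι → ℝ := fun i =>
    Lagrange.nodalWeight s v i * (q %ₘ Lagrange.nodal s v).eval (v i)
  have hr : r ∈ degreeLT ℝ k :=
    divByMonic_mem_degreeLT Lagrange.nodal_monic (by rwa [Lagrange.natDegree_nodal])
  have hpartial : (fun x => p.eval x * (q.eval x / (Lagrange.nodal s v).eval x)) =ᵐ[μ]
      fun x => p.eval x * r.eval x + ∑ i ∈ s, B i * (p.eval x * (x - v i)⁻¹) := by
    filter_upwards [hμK] with x hx
    rw [Lagrange.eval_div_nodal hvs q fun i hi => ne_of_mem_of_not_mem hx (hvK i hi),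
      mul_add, Finset.mul_sum]
    congr 1
    exact Finset.sum_congr rfl fun i _ => by ring
  have hint_r : Integrable (fun x => p.eval x * r.eval x) μ :=
    integrable_of_continuousOn_of_ae_mem hK hμK (by fun_prop)
  have hint_v (i) (hi : i ∈ s) : Integrable (fun x => p.eval x * (x - v i)⁻¹) μ :=
    integrable_eval_mul_inv_sub hK hμK p (hvK i hi)
  rw [integral_congr_ae hpartial, integral_add hint_r
    (integrable_finsetSum _ fun i hi => (hint_v i hi).const_mul (B i)),
    integral_finsetSum _ fun i hi => (hint_v i hi).const_mul (B i), hp r hr, zero_add]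
  exact Finset.sum_eq_zero fun i hi => by rw [integral_const_mul, hpv i hi, mul_zero]

structure IsMonicOrthogonalFamily (μ : Measure ℝ) (π : ℕ → ℝ[X]) : Prop where
  monic : ∀ j, (π j).Monic
  natDegree_eq : ∀ j, (π j).natDegree = j
  integral_mul_eq_zero : ∀ j k, j ≠ k → ∫ t, (π j).eval t * (π k).eval t ∂μ = 0

namespace IsMonicOrthogonalFamily

variable {μ : Measure ℝ} {π : ℕ → ℝ[X]}

theorem integral_mul_eq_zero_of_mem_degreeLT (hπ : IsMonicOrthogonalFamily μ π)
    (hint : ∀ p : ℝ[X], Integrable (fun x => p.eval x) μ) {l : ℕ} {q : ℝ[X]}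
    (hq : q ∈ degreeLT ℝ l) : ∫ x, (π l).eval x * q.eval x ∂μ = 0 := by
  have hint' (q : ℝ[X]) : Integrable (fun x => (π l).eval x * q.eval x) μ := by
    simpa using hint (π l * q)
  rw [← (Sequence.ofMonic_s11 π hπ.monic hπ.natDegree_eq).span_degreeLT
    (fun i _ => by simp [Sequence.ofMonic_s11, (hπ.monic i).leadingCoeff])] at hq
  induction hq using Submodule.span_induction with
  | mem q hq =>
    obtain ⟨j, hj, rfl⟩ := hq
    exact hπ.integral_mul_eq_zero l j (Set.mem_Iio.1 hj).ne'
  | zero => simp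
  | add q r _ _ hq hr => simp only [eval_add, mul_add, integral_add (hint' q) (hint' r), hq, hr,
      add_zero]
  | smul a q _ hq => simp only [eval_smul, smul_eq_mul, mul_left_comm, integral_const_mul, hq,
      mul_zero]

theorem eq_C_mul_of_forall_integral_mul_eq_zero (hπ : IsMonicOrthogonalFamily μ π)
    (hint : ∀ p : ℝ[X], Integrable (fun x => p.eval x) μ)
    (hpos : ∀ p : ℝ[X], p ≠ 0 → 0 < ∫ t, (p.eval t) ^ 2 ∂μ) {n : ℕ} {p : ℝ[X]}
    (hp : p.degree ≤ n) (hperp : ∀ q ∈ degreeLT ℝ n, ∫ x, p.eval x * q.eval x ∂μ = 0) :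
    p = C (p.coeff n) * π n := by
  set E := p - C (p.coeff n) * π n
  have hE : E ∈ degreeLT ℝ n :=
    mem_degreeLT.2 (degree_sub_C_coeff_mul_lt (hπ.monic n) (hπ.natDegree_eq n) hp)
  have hEE : ∫ x, E.eval x * E.eval x ∂μ = 0 := by
    have hpE : Integrable (fun x => p.eval x * E.eval x) μ := by simpa using hint (p * E)
    have hπE : Integrable (fun x => (π n).eval x * E.eval x) μ := by simpa using hint (π n * E)
    calc ∫ x, E.eval x * E.eval x ∂μ
        = ∫ x, p.eval x * E.eval x ∂μ - p.coeff n * ∫ x, (π n).eval x * E.eval x ∂μ := by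
          rw [← integral_const_mul, ← integral_sub hpE (hπE.const_mul _)]
          congr 1 with x
          have hEx : E.eval x = p.eval x - p.coeff n * (π n).eval x := by simp [E]
          rw [hEx]
          ring
      _ = 0 := by
          rw [hperp E hE, hπ.integral_mul_eq_zero_of_mem_degreeLT hint hE, mul_zero, sub_zero]
  exact sub_eq_zero.1 (eq_zero_of_integral_eval_mul_self_eq_zero hpos hEE)

theorem sum_smul_mem_degreeLT (hπ : IsMonicOrthogonalFamily μ π) (k : ℕ) {N : ℕ}
    (c : Fin N → ℝ) : ∑ j, c j • π (k + j) ∈ degreeLT ℝ (k + N) := by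
  refine Submodule.sum_mem _ fun j _ => Submodule.smul_mem _ _ ?_
  rw [mem_degreeLT, degree_eq_natDegree (hπ.monic _).ne_zero, hπ.natDegree_eq, Nat.cast_lt]
  omega

theorem coeff_sum_smul (hπ : IsMonicOrthogonalFamily μ π) (k : ℕ) {N : ℕ}
    (c : Fin (N + 1) → ℝ) : (∑ j, c j • π (k + j)).coeff (k + N) = c (Fin.last N) := by
  have hlead : (π (k + N)).coeff (k + N) = 1 := by
    simpa [hπ.natDegree_eq] using (hπ.monic (k + N)).coeff_natDegree
  simp only [Fin.sum_univ_castSucc, Fin.val_castSucc]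
  rw [coeff_add, coeff_eq_zero_of_degree_lt
    (mem_degreeLT.1 (hπ.sum_smul_mem_degreeLT k fun j => c j.castSucc)), coeff_smul, Fin.val_last,
    hlead, smul_eq_mul, mul_one, zero_add]

theorem eq_zero_of_sum_smul_eq_zero (hπ : IsMonicOrthogonalFamily μ π) (k : ℕ) {N : ℕ}
    {c : Fin N → ℝ} (hc : ∑ j, c j • π (k + j) = 0) : c = 0 := by
  have hli := (Sequence.ofMonic_s11 π hπ.monic hπ.natDegree_eq).linearIndependent.comp
    (fun j : Fin N => k + (j : ℕ)) fun i j hij => Fin.ext (by simpa using hij)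
  exact funext (Fintype.linearIndependent_iff.1 hli c hc)

end IsMonicOrthogonalFamily

section PoleModification

variable {ι : Type*} [Fintype ι]

/-- The measure `dα^{[0,m]}(t) = ∏ⱼ (εⱼ - t)⁻¹ dα(t)`. -/
noncomputable def poleModification (α : Measure ℝ) (ε : ι → ℝ) : Measure ℝ :=
  α.withDensity fun t => ENNReal.ofReal (∏ j, (ε j - t))⁻¹

variable {α : Measure ℝ} {Q : ℝ} {ε : ι → ℝ}

theorem prod_sub_pos (hεQ : ∀ i, Q < ε i) {x : ℝ} (hx : x ∈ Set.Icc (-Q) Q) :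
    0 < ∏ j, (ε j - x) :=
  Finset.prod_pos fun j _ => sub_pos.2 (hx.2.trans_lt (hεQ j))

theorem continuousOn_inv_prod_sub (hεQ : ∀ i, Q < ε i) :
    ContinuousOn (fun x => (∏ j, (ε j - x))⁻¹) (Set.Icc (-Q) Q) :=
  (by fun_prop : Continuous fun x => ∏ j, (ε j - x)).continuousOn.inv₀
    fun _ hx => (prod_sub_pos hεQ hx).ne'

theorem integral_poleModification (hQ : α (Set.Icc (-Q) Q)ᶜ = 0) (hεQ : ∀ i, Q < ε i)
    (f : ℝ → ℝ) : ∫ x, f x ∂poleModification α ε =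
      (-1) ^ Fintype.card ι * ∫ x, f x / (Lagrange.nodal Finset.univ ε).eval x ∂α := by
  rw [poleModification, integral_withDensity_eq_integral_toReal_smul (by fun_prop)
    (ae_of_all _ fun _ => ENNReal.ofReal_lt_top), ← integral_const_mul]
  refine integral_congr_ae ?_
  filter_upwards [ae_iff.2 hQ] with x hx
  have hsign : ∏ j, (ε j - x) = (-1) ^ Fintype.card ι * (Lagrange.nodal Finset.univ ε).eval x := by
    rw [Lagrange.eval_nodal, ← Finset.card_univ, ← Finset.prod_neg]
    simp
  rw [ENNReal.toReal_ofReal (inv_nonneg.2 (prod_sub_pos hεQ hx).le), hsign, smul_eq_mul, mul_inv,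
    ← inv_pow, inv_neg_one, div_eq_mul_inv]
  ring

theorem isFiniteMeasure_poleModification [IsFiniteMeasure α] (hQ : α (Set.Icc (-Q) Q)ᶜ = 0)
    (hεQ : ∀ i, Q < ε i) : IsFiniteMeasure (poleModification α ε) :=
  isFiniteMeasure_withDensity_ofReal (integrable_of_continuousOn_of_ae_mem isCompact_Icc
    (ae_iff.2 hQ) (continuousOn_inv_prod_sub hεQ)).hasFiniteIntegral


theorem ae_mem_poleModification (hQ : α (Set.Icc (-Q) Q)ᶜ = 0) :
    ∀ᵐ x ∂poleModification α ε, x ∈ Set.Icc (-Q) Q :=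
  (withDensity_absolutelyContinuous α _).ae_le (ae_iff.2 hQ)

theorem integral_sq_poleModification_pos [IsFiniteMeasure α] (hQ : α (Set.Icc (-Q) Q)ᶜ = 0)
    (hεQ : ∀ i, Q < ε i) (hpos : ∀ p : ℝ[X], p ≠ 0 → 0 < ∫ t, (p.eval t) ^ 2 ∂α) :
    ∀ p : ℝ[X], p ≠ 0 → 0 < ∫ t, (p.eval t) ^ 2 ∂poleModification α ε := by
  have := isFiniteMeasure_poleModification hQ hεQ
  have hα : α ≪ poleModification α ε := withDensity_absolutelyContinuous' (by fun_prop) <| by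
    filter_upwards [ae_iff.2 hQ] with x hx
    exact (ENNReal.ofReal_pos.2 (inv_pos.2 (prod_sub_pos hεQ hx))).ne'
  exact fun p hp => integral_pos_of_absolutelyContinuous hα (fun x => sq_nonneg _)
    (integrable_of_continuousOn_of_ae_mem isCompact_Icc (ae_mem_poleModification hQ)
      (by fun_prop)) (hpos p hp)

theorem integral_poleModification_eq_zero [IsFiniteMeasure α] (hQ : α (Set.Icc (-Q) Q)ᶜ = 0)
    (hε : Function.Injective ε) (hεQ : ∀ i, Q < ε i) {k : ℕ} {p : ℝ[X]}
    (hp : ∀ r ∈ degreeLT ℝ k, ∫ x, p.eval x * r.eval x ∂α = 0)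
    (hpε : ∀ i, ∫ x, p.eval x * (x - ε i)⁻¹ ∂α = 0) {q : ℝ[X]}
    (hq : q ∈ degreeLT ℝ (k + Fintype.card ι)) :
    ∫ x, p.eval x * q.eval x ∂poleModification α ε = 0 := by
  rw [integral_poleModification hQ hεQ]
  simp_rw [mul_div_assoc]
  rw [integral_eval_mul_div_nodal_eq_zero isCompact_Icc (ae_iff.2 hQ) hε.injOn
    (fun i _ hi => (hεQ i).not_ge hi.2) hp (fun i _ => hpε i) hq, mul_zero]

end PoleModification

section Uvarov

variable {m : ℕ}

/-- Entries `∫ π_{k+j}(x) / (x - εᵢ) dα(x)`: the Cauchy transforms `h_{k+j}(εᵢ)` without their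
factor `1/(2πi)`. -/
noncomputable def cauchyTransformMatrix (α : Measure ℝ) (π : ℕ → ℝ[X]) (ε : Fin m → ℝ)
    (k N : ℕ) : Matrix (Fin m) (Fin N) ℝ :=
  of fun i j => ∫ x, (π (k + j)).eval x * (x - ε i)⁻¹ ∂α

theorem cauchyTransformMatrix_submatrix_castSucc (α : Measure ℝ) (π : ℕ → ℝ[X])
    (ε : Fin m → ℝ) (k N : ℕ) :
    (cauchyTransformMatrix α π ε k (N + 1)).submatrix id Fin.castSucc =
      cauchyTransformMatrix α π ε k N :=
  rfl

variable {α : Measure ℝ} {Q : ℝ} {π : ℕ → ℝ[X]} {ε : Fin m → ℝ}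

theorem integral_poleModification_sum_smul_mul_eq_zero [IsFiniteMeasure α]
    (hQ : α (Set.Icc (-Q) Q)ᶜ = 0) (hπ : IsMonicOrthogonalFamily α π)
    (hε : Function.Injective ε) (hεQ : ∀ i, Q < ε i) {k N : ℕ} {c : Fin N → ℝ}
    (hc : cauchyTransformMatrix α π ε k N *ᵥ c = 0) {q : ℝ[X]} (hq : q ∈ degreeLT ℝ (k + m)) :
    ∫ x, (∑ j, c j • π (k + j)).eval x * q.eval x ∂poleModification α ε = 0 := by
  have hint (p : ℝ[X]) : Integrable (fun x => p.eval x) α :=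
    integrable_of_continuousOn_of_ae_mem isCompact_Icc (ae_iff.2 hQ) p.continuous.continuousOn
  refine integral_poleModification_eq_zero hQ hε hεQ (fun r hr => ?_) (fun i => ?_)
    (by rwa [Fintype.card_fin])
  · rw [integral_eval_sum_smul_mul _ _ _ fun j _ => by simpa using hint (π (k + j) * r)]
    refine Finset.sum_eq_zero fun j _ => ?_
    rw [hπ.integral_mul_eq_zero_of_mem_degreeLT hint (degreeLT_mono (by omega) hr), mul_zero]
  · rw [integral_eval_sum_smul_mul _ _ _ fun j _ =>
      integrable_eval_mul_inv_sub isCompact_Icc (ae_iff.2 hQ) _ fun hx => (hεQ i).not_ge hx.2]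
    simpa [cauchyTransformMatrix, mulVec, dotProduct, mul_comm] using congrFun hc i

theorem det_cauchyTransformMatrix_ne_zero [IsFiniteMeasure α] (hQ : α (Set.Icc (-Q) Q)ᶜ = 0)
    (hpos : ∀ p : ℝ[X], p ≠ 0 → 0 < ∫ t, (p.eval t) ^ 2 ∂α) (hπ : IsMonicOrthogonalFamily α π)
    (hε : Function.Injective ε) (hεQ : ∀ i, Q < ε i) (k : ℕ) :
    (cauchyTransformMatrix α π ε k m).det ≠ 0 := by
  intro hdet
  obtain ⟨v, hv0, hv⟩ := exists_mulVec_eq_zero_iff.2 hdet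
  set p := ∑ j, v j • π (k + j)
  have hp : p = 0 := eq_zero_of_integral_eval_mul_self_eq_zero
    (integral_sq_poleModification_pos hQ hεQ hpos)
    (integral_poleModification_sum_smul_mul_eq_zero hQ hπ hε hεQ hv
      (hπ.sum_smul_mem_degreeLT k v))
  exact hv0 (hπ.eq_zero_of_sum_smul_eq_zero k hp)

theorem sum_lastRowCofactor_smul_eq [IsFiniteMeasure α] (hQ : α (Set.Icc (-Q) Q)ᶜ = 0)
    (hpos : ∀ p : ℝ[X], p ≠ 0 → 0 < ∫ t, (p.eval t) ^ 2 ∂α) (hπ : IsMonicOrthogonalFamily α π)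
    (hε : Function.Injective ε) (hεQ : ∀ i, Q < ε i) {π' : ℕ → ℝ[X]}
    (hπ' : IsMonicOrthogonalFamily (poleModification α ε) π') (k : ℕ) :
    ∑ j, (cauchyTransformMatrix α π ε k (m + 1)).lastRowCofactor j • π (k + j) =
      C (cauchyTransformMatrix α π ε k m).det * π' (k + m) := by
  set A := cauchyTransformMatrix α π ε k (m + 1)
  have := isFiniteMeasure_poleModification hQ hεQ
  have hdeg := hπ.sum_smul_mem_degreeLT k A.lastRowCofactor
  rw [← add_assoc, degreeLT_succ_eq_degreeLE, mem_degreeLE] at hdeg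
  rw [← cauchyTransformMatrix_submatrix_castSucc, ← A.lastRowCofactor_last,
    ← hπ.coeff_sum_smul k A.lastRowCofactor]
  exact hπ'.eq_C_mul_of_forall_integral_mul_eq_zero
    (fun p => integrable_of_continuousOn_of_ae_mem isCompact_Icc (ae_mem_poleModification hQ)
      p.continuous.continuousOn) (integral_sq_poleModification_pos hQ hεQ hpos) hdeg
    fun q => integral_poleModification_sum_smul_mul_eq_zero hQ hπ hε hεQ A.mulVec_lastRowCofactor

end Uvarov

/-- Uvarov's formula (pure poles): the monic orthogonal polynomial for the measure
`dα(t)/∏_j (ε_j - t)` as a ratio of determinants built from Cauchy transforms. -/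
theorem uvarov_formula (α : Measure ℝ) [IsFiniteMeasure α] (Q : ℝ)
    (hQ : α (Set.Icc (-Q) Q)ᶜ = 0)
    (hposdef : ∀ p : Polynomial ℝ, p ≠ 0 → 0 < ∫ t, (p.eval t) ^ 2 ∂α)
    (π : ℕ → Polynomial ℝ)
    (hmonic : ∀ j, (π j).Monic) (hdeg : ∀ j, (π j).natDegree = j)
    (horth : ∀ j k, j ≠ k → ∫ t, (π j).eval t * (π k).eval t ∂α = 0)
    -- Cauchy transforms h_k(ε) = (1/2πi) ∫ π_k(t)/(t-ε) dα(t)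
    (h : ℕ → ℝ → ℂ)
    (hh : ∀ k e, h k e =
      (1 / (2 * (Real.pi : ℂ) * Complex.I)) *
        ∫ t, Complex.ofReal ((π k).eval t) / ((t : ℂ) - (e : ℂ)) ∂α)
    (m n : ℕ) (hmn : m ≤ n)
    (ε : Fin m → ℝ) (hε : Function.Injective ε) (hεQ : ∀ i, Q < ε i)
    -- the modified measure dα^{[0,m]}(t) = ∏_j (ε_j - t)⁻¹ dα(t)
    (α' : Measure ℝ)
    (hα' : α' = α.withDensity (fun t => ENNReal.ofReal (∏ j, (ε j - t))⁻¹))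
    -- its monic orthogonal polynomials
    (π' : ℕ → Polynomial ℝ)
    (hmonic' : ∀ j, (π' j).Monic) (hdeg' : ∀ j, (π' j).natDegree = j)
    (horth' : ∀ j k, j ≠ k → ∫ t, (π' j).eval t * (π' k).eval t ∂α' = 0)
    (t : ℝ) :
    Complex.ofReal ((π' n).eval t) =
      (Matrix.of fun i j : Fin (m + 1) =>
          if hi : (i : ℕ) < m then h (n - m + j) (ε ⟨i, hi⟩)
          else Complex.ofReal ((π (n - m + j)).eval t)).det /
        (Matrix.of fun i j : Fin m => h (n - m + j) (ε i)).det := by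
  subst hα'
  obtain ⟨k, rfl⟩ : ∃ k, n = k + m := ⟨n - m, by omega⟩
  simp only [Nat.add_sub_cancel]
  have hπ : IsMonicOrthogonalFamily α π := ⟨hmonic, hdeg, horth⟩
  set A := cauchyTransformMatrix α π ε k (m + 1)
  set κ : ℂ := 1 / (2 * (Real.pi : ℂ) * Complex.I)
  have hκ : κ ≠ 0 := by simp [κ, Real.pi_ne_zero, Complex.I_ne_zero]
  have hA : (of fun (i : Fin m) (j : Fin (m + 1)) => h (k + j) (ε i)) =
      κ • A.map Complex.ofRealHom := by
    ext i j
    simp only [of_apply, hh, Matrix.smul_apply, map_apply, A, cauchyTransformMatrix,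
      Complex.ofRealHom_eq_coe, smul_eq_mul, ← integral_complex_ofReal]
    push_cast
    simp only [div_eq_mul_inv]
  have hP : ∑ j : Fin (m + 1), (π (k + j)).eval t * A.lastRowCofactor j =
      (cauchyTransformMatrix α π ε k m).det * (π' (k + m)).eval t := by
    simpa [eval_finsetSum, mul_comm] using congrArg (eval t)
      (sum_lastRowCofactor_smul_eq hQ hposdef hπ hε hεQ ⟨hmonic', hdeg', horth'⟩ k)
  rw [show (of fun i j : Fin (m + 1) => if hi : (i : ℕ) < m then h (k + j) (ε ⟨i, hi⟩)
      else Complex.ofReal ((π (k + j)).eval t)) = (κ • A.map Complex.ofRealHom).appendRow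
        (Complex.ofRealHom ∘ fun j : Fin (m + 1) => (π (k + j)).eval t) by rw [← hA]; rfl,
    show (of fun i j : Fin m => h (k + j) (ε i)) =
      (κ • A.map Complex.ofRealHom).submatrix id Fin.castSucc by rw [← hA]; rfl,
    ← lastRowCofactor_last, lastRowCofactor_smul_map, lastRowCofactor_last,
    cauchyTransformMatrix_submatrix_castSucc, det_appendRow_smul_map, det_appendRow, hP]
  simp only [Complex.ofRealHom_eq_coe, Complex.ofReal_mul]
  rw [mul_div_mul_left _ _ (pow_ne_zero _ hκ), mul_div_cancel_left₀ _
    (Complex.ofReal_ne_zero.2 (det_cauchyTransformMatrix_ne_zero hQ hposdef hπ hε hεQ k))]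
end

section
/- Fyodorov–Strahov formula for inverse products: for 1 ≤ M ≤ N, ⟨∏_{j=1}^{M} ∏_{i=1}^{N}(ε_j − xᵢ)^{−1}⟩ with respect to Δ(x)²dα(x)/Z_N equals (−1)^{M(M−1)/2} (∏_{j=N−M}^{N−1} γ_j / Δ(ε)) · det(h_{N−M+j−1}(εᵢ))₁≤i,j≤M. -/
open MeasureTheory Polynomial Finset Matrix

/-!
Multiplying row `i` of the matrix `[πₖ(xᵢ) | 1/(εⱼ - xᵢ)]` (`k < N - M`, `j < M`) by
`∏ⱼ (εⱼ - xᵢ)` turns every column into a polynomial of degree `< N`, so its determinant is `Δ(x)`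
times a constant, which turns out to be `± Δ(ε)`. This Cauchy–Vandermonde identity writes the
integrand as `± Δ(ε)⁻¹ det[πₖ(xᵢ) | 1/(εⱼ - xᵢ)] · det[πₖ(xᵢ)]`, and Andréief's identity turns its
integral into `N!` times the determinant of the matrix of integrals `∫ fₖ πₗ dα`. By orthogonality
that matrix is block triangular, with diagonal blocks `diag(c_k²)` and the Cauchy transforms
`∫ π_{N-M+j}(t) / (εᵢ - t) dα = -2πi h_{N-M+j}(εᵢ)`; the same argument gives `Z = N! ∏ c_k²`.
-/

namespace FyodorovStrahov

theorem det_vandermonde_eq_Vand {n : ℕ} (y : Fin n → ℝ) : (vandermonde y).det = Vand y := by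
  rw [det_vandermonde, Vand]
  exact prod_comm' (by simp [and_comm])

theorem Vand_ne_zero {n : ℕ} {y : Fin n → ℝ} (hy : Function.Injective y) : Vand y ≠ 0 :=
  prod_ne_zero_iff.2 fun _ _ => prod_ne_zero_iff.2 fun _ hj =>
    sub_ne_zero.2 (hy.ne (mem_Iio.1 hj).ne')

theorem Vand_eq_prod_ite {n : ℕ} (y : Fin n → ℝ) :
    Vand y = ∏ i, ∏ j, if j < i then y i - y j else 1 := by
  simp only [Vand, prod_ite, prod_const_one, mul_one, filter_gt_eq_Iio]

theorem Vand_append {m M : ℕ} (z : Fin m → ℝ) (ε : Fin M → ℝ) :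
    Vand (Fin.append z ε) = Vand z * Vand ε * ∏ b, ∏ a, (ε b - z a) := by
  have hlt : ∀ (a : Fin m) (b : Fin M), Fin.castAdd M a < Fin.natAdd m b := fun a b => by
    simp only [Fin.lt_def, Fin.val_castAdd, Fin.val_natAdd]; omega
  have hcast : ∀ (a a' : Fin m), Fin.castAdd M a' < Fin.castAdd M a ↔ a' < a :=
    fun _ _ => Iff.rfl
  simp only [Vand_eq_prod_ite, Fin.prod_univ_add, Fin.append_left, Fin.append_right, hlt, hcast,
    (hlt _ _).not_gt, Fin.natAdd_lt_natAdd_iff, if_true, if_false, prod_const_one,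
    prod_mul_distrib]
  ring

theorem prod_prod_erase_sub {M : ℕ} (ε : Fin M → ℝ) :
    ∏ j, ∏ j' ∈ univ.erase j, (ε j' - ε j) = (-1) ^ (M * (M - 1) / 2) * Vand ε ^ 2 := by
  have hsplit : ∀ j, ∏ j' ∈ univ.erase j, (ε j' - ε j)
      = (-1) ^ (j : ℕ) * (∏ j' ∈ Iio j, (ε j - ε j')) * ∏ j' ∈ Ioi j, (ε j' - ε j) := by
    intro j
    have : univ.erase j = Iio j ∪ Ioi j := by ext; simp
    rw [this, prod_union (disjoint_left.2 fun _ h h' => (mem_Iio.1 h).not_gt (mem_Ioi.1 h')),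
      ← Fin.card_Iio j, ← prod_const, ← prod_mul_distrib]
    congr 1
    exact prod_congr rfl fun _ _ => by ring
  have hsum : ∑ j : Fin M, (j : ℕ) = M * (M - 1) / 2 := by
    rw [Fin.sum_univ_eq_sum_range (·) M, sum_range_id]
  rw [prod_congr rfl fun j _ => hsplit j, prod_mul_distrib, prod_mul_distrib,
    prod_pow_eq_pow_sum, hsum, ← det_vandermonde, det_vandermonde_eq_Vand, Vand]
  ring

section nodalSub

variable {R ι : Type*} [CommRing R] (s : Finset ι) (v : ι → R)

noncomputable def nodalSub : R[X] := ∏ i ∈ s, (C (v i) - X)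

theorem eval_nodalSub (t : R) : (nodalSub s v).eval t = ∏ i ∈ s, (v i - t) := by
  simp [nodalSub, eval_prod]

variable [IsDomain R]

theorem natDegree_C_sub_X (a : R) : (C a - X).natDegree = 1 := by
  rw [← neg_sub, natDegree_neg, natDegree_X_sub_C]

theorem natDegree_nodalSub : (nodalSub s v).natDegree = #s := by
  rw [nodalSub, natDegree_prod _ _ fun i _ =>
    ne_zero_of_natDegree_gt (natDegree_C_sub_X (v i)).symm.le]
  simp [natDegree_C_sub_X]

end nodalSub

theorem det_eval_eq_Vand_mul_det_coeff {n : ℕ} (p : Fin n → ℝ[X])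
    (hp : ∀ c, (p c).natDegree < n) (y : Fin n → ℝ) :
    (of fun i c => (p c).eval (y i)).det =
      Vand y * (of fun (d : Fin n) c => (p c).coeff d).det := by
  have : (of fun i c => (p c).eval (y i)) =
      vandermonde y * of fun (d : Fin n) c => (p c).coeff d := by
    ext i c
    rw [of_apply, mul_apply, eval_eq_sum_range' (hp c), ← Fin.sum_univ_eq_sum_range]
    simp [mul_comm]
  rw [this, det_mul, det_vandermonde_eq_Vand]

theorem det_eval_eq_Vand {n : ℕ} (π : ℕ → ℝ[X]) (hmonic : ∀ j, (π j).Monic)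
    (hdeg : ∀ j, (π j).natDegree = j) (y : Fin n → ℝ) :
    (of fun i k : Fin n => (π k).eval (y i)).det = Vand y := by
  rw [det_eval_eq_Vand_mul_det_coeff _ (fun k => by simp [hdeg]) y, det_of_isUpperTriangular,
    prod_eq_one fun k _ => by simpa [hdeg] using (hmonic k).coeff_natDegree, mul_one]
  exact fun d k hkd => coeff_eq_zero_of_natDegree_lt (by simpa [hdeg] using hkd)

section cauchyColumns

variable {m M : ℕ} (π : ℕ → ℝ[X]) (ε : Fin M → ℝ)

noncomputable def cauchyColumns : Fin (m + M) → ℝ[X] :=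
  Fin.append (fun k => π k * nodalSub univ ε) fun j => nodalSub (univ.erase j) ε

noncomputable def cauchyFunctions : Fin (m + M) → ℝ → ℝ :=
  Fin.append (fun k t => (π k).eval t) fun j t => (ε j - t)⁻¹

theorem natDegree_cauchyColumns_lt (hdeg : ∀ j, (π j).natDegree = j) (c : Fin (m + M)) :
    (cauchyColumns π ε c).natDegree < m + M := by
  refine Fin.addCases (fun k => ?_) (fun j => ?_) c
  · rw [cauchyColumns, Fin.append_left]
    calc (π k * nodalSub univ ε).natDegree ≤ k + M := by
          simpa [hdeg, natDegree_nodalSub] using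
            natDegree_mul_le (p := π k) (q := nodalSub univ ε)
      _ < m + M := by omega
  · rw [cauchyColumns, Fin.append_right, natDegree_nodalSub, card_erase_of_mem (mem_univ j),
      card_univ, Fintype.card_fin]
    have := j.isLt
    omega

theorem submatrix_eval_cauchyColumns_append (z : Fin m → ℝ) :
    (of fun i c => (cauchyColumns π ε c).eval (Fin.append z ε i)).submatrix
        finSumFinEquiv finSumFinEquiv =
      fromBlocks
        (diagonal (fun a => (nodalSub univ ε).eval (z a)) *
          of fun a (k : Fin m) => (π k).eval (z a))
        (of fun a j => (nodalSub (univ.erase j) ε).eval (z a)) 0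
        (diagonal fun j => ∏ j' ∈ univ.erase j, (ε j' - ε j)) := by
  ext (a | b) (k | j)
  · simp [cauchyColumns, mul_comm]
  · simp [cauchyColumns]
  · simp [cauchyColumns, eval_nodalSub, prod_eq_zero (mem_univ b)]
  · by_cases hbj : b = j
    · simp [cauchyColumns, eval_nodalSub, hbj]
    · simp [cauchyColumns, eval_nodalSub, hbj, prod_eq_zero (mem_erase.2 ⟨hbj, mem_univ b⟩)]

/-- Evaluating at the nodes `(z, ε)`, with `z` far to the right of `ε`, makes the matrix block
triangular, which pins down the constant `det (coeff)` of `det_eval_eq_Vand_mul_det_coeff`. -/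
theorem det_coeff_cauchyColumns (hmonic : ∀ j, (π j).Monic) (hdeg : ∀ j, (π j).natDegree = j)
    (hε : Function.Injective ε) :
    (of fun (d : Fin (m + M)) c => (cauchyColumns π ε c).coeff d).det =
      (-1) ^ (M * (M - 1) / 2) * Vand ε := by
  obtain ⟨R, hR⟩ := (univ.image ε).exists_le
  set z : Fin m → ℝ := fun a => R + 1 + a
  have hεz : ∀ a b, ε b - z a ≠ 0 := fun a b => by
    have := hR (ε b) (mem_image_of_mem ε (mem_univ b))
    have : (0 : ℝ) ≤ a := Nat.cast_nonneg _
    simp only [z]; linarith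
  have hz : Function.Injective z := fun a a' h => Fin.ext (by simpa [z] using h)
  have hblock := det_eval_eq_Vand_mul_det_coeff _ (natDegree_cauchyColumns_lt π ε hdeg)
    (Fin.append z ε)
  rw [← det_submatrix_equiv_self finSumFinEquiv, submatrix_eval_cauchyColumns_append,
    det_fromBlocks_zero₂₁, det_mul, det_diagonal, det_eval_eq_Vand π hmonic hdeg, det_diagonal,
    prod_prod_erase_sub, Vand_append] at hblock
  have hne : Vand z * Vand ε * ∏ b, ∏ a, (ε b - z a) ≠ 0 :=
    mul_ne_zero (mul_ne_zero (Vand_ne_zero hz) (Vand_ne_zero hε))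
      (prod_ne_zero_iff.2 fun b _ => prod_ne_zero_iff.2 fun a _ => hεz a b)
  refine mul_left_cancel₀ hne (hblock.symm.trans ?_)
  simp only [eval_nodalSub]
  rw [prod_comm]
  ring

theorem eval_cauchyColumns {t : ℝ} (ht : ∀ j, ε j ≠ t) (c : Fin (m + M)) :
    (cauchyColumns π ε c).eval t = (nodalSub univ ε).eval t * cauchyFunctions π ε c t := by
  refine Fin.addCases (fun k => ?_) (fun j => ?_) c
  · simp [cauchyColumns, cauchyFunctions, mul_comm]
  · simp only [cauchyColumns, cauchyFunctions, Fin.append_right, eval_nodalSub,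
      ← mul_prod_erase univ (fun j => ε j - t) (mem_univ j)]
    field_simp [sub_ne_zero.2 (ht j)]

theorem prod_mul_det_cauchyFunctions (hmonic : ∀ j, (π j).Monic)
    (hdeg : ∀ j, (π j).natDegree = j) (hε : Function.Injective ε) (x : Fin (m + M) → ℝ)
    (hx : ∀ i j, ε j ≠ x i) :
    (∏ j, ∏ i, (ε j - x i)) * (of fun i c => cauchyFunctions π ε c (x i)).det =
      (-1) ^ (M * (M - 1) / 2) * Vand ε * Vand x := by
  set A := of fun i c => cauchyFunctions π ε c (x i)
  have hrows : (of fun i c => (cauchyColumns π ε c).eval (x i)) =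
      of fun i c => (nodalSub univ ε).eval (x i) * A i c := by
    ext i c
    exact eval_cauchyColumns π ε (hx i) c
  have key := det_eval_eq_Vand_mul_det_coeff _ (natDegree_cauchyColumns_lt π ε hdeg) x
  rw [det_coeff_cauchyColumns π ε hmonic hdeg hε, hrows, det_mul_column] at key
  simp only [eval_nodalSub] at key
  rw [prod_comm]
  linear_combination key

end cauchyColumns

section Andreief

open Equiv Equiv.Perm

variable {ι : Type*} [Fintype ι] [DecidableEq ι]

theorem sum_perm_sum_perm_sign_mul_prod {R : Type*} [CommRing R] (T : Matrix ι ι R) :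
    ∑ σ : Perm ι, ∑ τ : Perm ι, ((sign σ : ℤ) : R) * ((sign τ : ℤ) : R) * ∏ i, T (σ i) (τ i) =
      (Fintype.card ι).factorial * T.det := by
  have hinner : ∀ σ : Perm ι,
      ∑ τ : Perm ι, ((sign σ : ℤ) : R) * ((sign τ : ℤ) : R) * ∏ i, T (σ i) (τ i) = T.det := by
    intro σ
    rw [← det_transpose, det_apply', ← Equiv.sum_comp (Equiv.mulRight σ)]
    refine sum_congr rfl fun ρ _ => ?_
    have hsign : ((sign σ : ℤ) : R) * ((sign (ρ * σ) : ℤ) : R) = ((sign ρ : ℤ) : R) := by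
      rw [Perm.sign_mul, Units.val_mul, Int.cast_mul, mul_left_comm, ← Int.cast_mul,
        ← Units.val_mul, Int.units_mul_self, Units.val_one, Int.cast_one, mul_one]
    rw [Equiv.coe_mulRight, hsign]
    exact congrArg _ (Equiv.prod_comp σ fun j => T j (ρ j))
  rw [sum_congr rfl fun σ _ => hinner σ, sum_const, card_univ, Fintype.card_perm, nsmul_eq_mul]

variable {Ω : Type*} [MeasurableSpace Ω]

theorem integral_det_mul_det (μ : Measure Ω) [SigmaFinite μ] (f g : ι → Ω → ℝ)
    (hfg : ∀ c k, Integrable (fun t => f c t * g k t) μ) :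
    ∫ x : ι → Ω, (of fun i c => f c (x i)).det * (of fun i k => g k (x i)).det
        ∂(Measure.pi fun _ => μ) =
      (Fintype.card ι).factorial * (of fun c k => ∫ t, f c t * g k t ∂μ).det := by
  have hexpand : ∀ x : ι → Ω, (of fun i c => f c (x i)).det * (of fun i k => g k (x i)).det =
      ∑ σ : Perm ι, ∑ τ : Perm ι, ((sign σ : ℤ) : ℝ) * ((sign τ : ℤ) : ℝ) *
        ∏ i, (f (σ i) (x i) * g (τ i) (x i)) := by
    intro x
    rw [← det_transpose, ← det_transpose (of fun i k => g k (x i)), det_apply', det_apply',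
      sum_mul_sum]
    simp only [transpose_apply, of_apply, prod_mul_distrib]
    exact sum_congr rfl fun σ _ => sum_congr rfl fun τ _ => by ring
  have hint : ∀ σ τ : Perm ι, Integrable
      (fun x : ι → Ω => ∏ i, (f (σ i) (x i) * g (τ i) (x i))) (Measure.pi fun _ => μ) :=
    fun σ τ => Integrable.fintype_prod fun i => hfg (σ i) (τ i)
  simp_rw [hexpand]
  rw [integral_finsetSum _ fun σ _ => integrable_finsetSum _ fun τ _ => (hint σ τ).const_mul _,
    ← sum_perm_sum_perm_sign_mul_prod]
  refine sum_congr rfl fun σ _ => ?_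
  rw [integral_finsetSum _ fun τ _ => (hint σ τ).const_mul _]
  refine sum_congr rfl fun τ _ => ?_
  rw [integral_const_mul, integral_fintype_prod_eq_prod (fun i t => f (σ i) t * g (τ i) t)]
  rfl

end Andreief

section Measure

open Set

variable {α : Measure ℝ} {Q : ℝ} {π : ℕ → ℝ[X]} {c : ℕ → ℝ} {m M : ℕ} {ε : Fin M → ℝ}

theorem integrable_of_continuousOn_Icc [IsFiniteMeasureOnCompacts α] {a b : ℝ}
    (hα : α (Icc a b)ᶜ = 0) {f : ℝ → ℝ} (hf : ContinuousOn f (Icc a b)) : Integrable f α := by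
  rw [← Measure.restrict_eq_self_of_ae_mem (ae_iff.2 hα : ∀ᵐ t ∂α, t ∈ Icc a b)]
  exact hf.integrableOn_compact isCompact_Icc

theorem integral_eval_mul_eval (horth : ∀ j k, j ≠ k → ∫ t, (π j).eval t * (π k).eval t ∂α = 0)
    (hc : ∀ j, c j ^ 2 = ∫ t, (π j).eval t ^ 2 ∂α) (j k : ℕ) :
    ∫ t, (π j).eval t * (π k).eval t ∂α = if j = k then c j ^ 2 else 0 := by
  split_ifs with hjk
  · simp [hjk, hc, sq]
  · exact horth j k hjk

theorem integral_Vand_sq [IsFiniteMeasure α] (hQ : α (Icc (-Q) Q)ᶜ = 0)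
    (hmonic : ∀ j, (π j).Monic) (hdeg : ∀ j, (π j).natDegree = j)
    (horth : ∀ j k, j ≠ k → ∫ t, (π j).eval t * (π k).eval t ∂α = 0)
    (hc : ∀ j, c j ^ 2 = ∫ t, (π j).eval t ^ 2 ∂α) (n : ℕ) :
    ∫ x : Fin n → ℝ, Vand x ^ 2 ∂(Measure.pi fun _ => α) = n.factorial * ∏ k : Fin n, c k ^ 2 := by
  have hgram := integral_det_mul_det α (fun (k : Fin n) t => (π k).eval t)
    (fun k t => (π k).eval t) fun j k =>
      integrable_of_continuousOn_Icc hQ ((π j).continuous.mul (π k).continuous).continuousOn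
  simp only [det_eval_eq_Vand π hmonic hdeg, Fintype.card_fin,
    integral_eval_mul_eval horth hc, Fin.val_inj] at hgram
  rw [funext fun x => sq (Vand x), hgram]
  exact congrArg _ (det_diagonal (d := fun k : Fin n => c k ^ 2))

theorem continuousOn_cauchyFunctions (hεQ : ∀ j, Q < ε j) (c : Fin (m + M)) :
    ContinuousOn (cauchyFunctions π ε c) (Iic Q) := by
  refine Fin.addCases (fun k => ?_) (fun j => ?_) c
  · simpa [cauchyFunctions] using (π k).continuous.continuousOn
  · simp only [cauchyFunctions, Fin.append_right]
    exact (continuousOn_const.sub continuousOn_id).inv₀ fun t ht =>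
      sub_ne_zero.2 (lt_of_le_of_lt ht (hεQ j)).ne'

theorem det_integral_cauchyFunctions_mul
    (horth : ∀ j k, j ≠ k → ∫ t, (π j).eval t * (π k).eval t ∂α = 0)
    (hc : ∀ j, c j ^ 2 = ∫ t, (π j).eval t ^ 2 ∂α) :
    (of fun (c' k : Fin (m + M)) => ∫ t, cauchyFunctions π ε c' t * (π k).eval t ∂α).det =
      (∏ k : Fin m, c k ^ 2) *
        (of fun j j' : Fin M => ∫ t, (ε j - t)⁻¹ * (π (m + j')).eval t ∂α).det := by
  rw [← det_submatrix_equiv_self finSumFinEquiv]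
  have hblocks : (of fun (c' k : Fin (m + M)) =>
        ∫ t, cauchyFunctions π ε c' t * (π k).eval t ∂α).submatrix finSumFinEquiv finSumFinEquiv =
      fromBlocks (diagonal fun k : Fin m => c k ^ 2) 0
        (of fun j (k : Fin m) => ∫ t, (ε j - t)⁻¹ * (π k).eval t ∂α)
        (of fun j j' : Fin M => ∫ t, (ε j - t)⁻¹ * (π (m + j')).eval t ∂α) := by
    ext (k | j) (k' | j')
    · simp [cauchyFunctions, integral_eval_mul_eval horth hc, diagonal_apply, Fin.val_inj]
    · simp [cauchyFunctions, integral_eval_mul_eval horth hc, (Nat.lt_add_right _ k.isLt).ne]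
    · simp [cauchyFunctions]
    · simp [cauchyFunctions]
  rw [hblocks, det_fromBlocks_zero₁₂, det_diagonal]

theorem integral_inv_prod_mul_Vand_sq [IsFiniteMeasure α] (hQ : α (Icc (-Q) Q)ᶜ = 0)
    (hmonic : ∀ j, (π j).Monic) (hdeg : ∀ j, (π j).natDegree = j)
    (horth : ∀ j k, j ≠ k → ∫ t, (π j).eval t * (π k).eval t ∂α = 0)
    (hc : ∀ j, c j ^ 2 = ∫ t, (π j).eval t ^ 2 ∂α)
    (hε : Function.Injective ε) (hεQ : ∀ j, Q < ε j) :
    (-1) ^ (M * (M - 1) / 2) * Vand ε *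
        ∫ x : Fin (m + M) → ℝ, (∏ j, ∏ i, (ε j - x i))⁻¹ * Vand x ^ 2 ∂(Measure.pi fun _ => α) =
      (m + M).factorial * ((∏ k : Fin m, c k ^ 2) *
        (of fun j j' : Fin M => ∫ t, (ε j - t)⁻¹ * (π (m + j')).eval t ∂α).det) := by
  have hsupp : ∀ᵐ x ∂(Measure.pi fun _ : Fin (m + M) => α), ∀ i, x i ∈ Icc (-Q) Q :=
    ae_all_iff.2 fun _ => ae_iff.2 (Measure.pi_eval_preimage_null (fun _ => α) hQ)
  have hdet : ∀ x : Fin (m + M) → ℝ, (∀ i, x i ∈ Icc (-Q) Q) →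
      (-1) ^ (M * (M - 1) / 2) * Vand ε * ((∏ j, ∏ i, (ε j - x i))⁻¹ * Vand x ^ 2) =
        (of fun i c' => cauchyFunctions π ε c' (x i)).det *
          (of fun i k : Fin (m + M) => (π k).eval (x i)).det := by
    intro x hx
    have hne : ∀ i j, ε j ≠ x i := fun i j => ((hx i).2.trans_lt (hεQ j)).ne'
    have hP : ∏ j, ∏ i, (ε j - x i) ≠ 0 :=
      prod_ne_zero_iff.2 fun j _ => prod_ne_zero_iff.2 fun i _ => sub_ne_zero.2 (hne i j)
    have hcauchy := prod_mul_det_cauchyFunctions π ε hmonic hdeg hε x hne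
    rw [← eq_inv_mul_iff_mul_eq₀ hP] at hcauchy
    rw [hcauchy, det_eval_eq_Vand π hmonic hdeg]
    ring
  have hint : ∀ c' k : Fin (m + M),
      Integrable (fun t => cauchyFunctions π ε c' t * (π k).eval t) α :=
    fun c' k => integrable_of_continuousOn_Icc hQ
      (((continuousOn_cauchyFunctions hεQ c').mono fun _ ht => ht.2).mul
        (π k).continuous.continuousOn)
  rw [← integral_const_mul, integral_congr_ae (hsupp.mono hdet),
    integral_det_mul_det α _ _ hint, Fintype.card_fin, det_integral_cauchyFunctions_mul horth hc]

theorem one_div_integral_Vand_sq_mul_integral_inv_prod_mul_Vand_sq [IsFiniteMeasure α]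
    (hQ : α (Icc (-Q) Q)ᶜ = 0) (hposdef : ∀ p : ℝ[X], p ≠ 0 → 0 < ∫ t, p.eval t ^ 2 ∂α)
    (hmonic : ∀ j, (π j).Monic) (hdeg : ∀ j, (π j).natDegree = j)
    (horth : ∀ j k, j ≠ k → ∫ t, (π j).eval t * (π k).eval t ∂α = 0)
    (hc : ∀ j, c j ^ 2 = ∫ t, (π j).eval t ^ 2 ∂α)
    (hε : Function.Injective ε) (hεQ : ∀ j, Q < ε j) :
    1 / (∫ x : Fin (m + M) → ℝ, Vand x ^ 2 ∂(Measure.pi fun _ => α)) *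
        ∫ x : Fin (m + M) → ℝ, (∏ j, ∏ i, (ε j - x i))⁻¹ * Vand x ^ 2 ∂(Measure.pi fun _ => α) =
      (-1) ^ (M * (M - 1) / 2) *
        (of fun j j' : Fin M => ∫ t, (ε j - t)⁻¹ * (π (m + j')).eval t ∂α).det /
          (Vand ε * ∏ j : Fin M, c (m + j) ^ 2) := by
  have hcne : ∀ j, c j ^ 2 ≠ 0 := fun j => (hc j ▸ hposdef _ (hmonic j).ne_zero).ne'
  have hfac : ((m + M).factorial : ℝ) ≠ 0 := Nat.cast_ne_zero.2 (Nat.factorial_ne_zero _)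
  have hcm : ∏ k : Fin m, c k ^ 2 ≠ 0 := prod_ne_zero_iff.2 fun k _ => hcne k
  have hcM : ∏ j : Fin M, c (m + j) ^ 2 ≠ 0 := prod_ne_zero_iff.2 fun j _ => hcne _
  have hsign : ((-1 : ℝ) ^ (M * (M - 1) / 2)) ^ 2 = 1 := by
    rw [← pow_mul, mul_comm, pow_mul, neg_one_sq, one_pow]
  have hI := integral_inv_prod_mul_Vand_sq (m := m) hQ hmonic hdeg horth hc hε hεQ
  set I := ∫ x : Fin (m + M) → ℝ, (∏ j, ∏ i, (ε j - x i))⁻¹ * Vand x ^ 2 ∂(Measure.pi fun _ => α)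
  rw [integral_Vand_sq hQ hmonic hdeg horth hc, Fin.prod_univ_add, one_div_mul_eq_div,
    div_eq_div_iff (mul_ne_zero hfac (by simpa using mul_ne_zero hcm hcM))
      (mul_ne_zero (Vand_ne_zero hε) hcM)]
  simp only [Fin.val_castAdd, Fin.val_natAdd]
  linear_combination (∏ j : Fin M, c (m + j) ^ 2) * (-1) ^ (M * (M - 1) / 2) * hI -
    I * Vand ε * (∏ j : Fin M, c (m + j) ^ 2) * hsign

theorem ofReal_integral_inv_sub_mul (μ : Measure ℝ) (f : ℝ → ℝ) (e : ℝ) :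
    ((∫ t, (e - t)⁻¹ * f t ∂μ : ℝ) : ℂ) = -∫ t, (f t : ℂ) / ((t : ℂ) - e) ∂μ := by
  rw [← integral_neg, ← integral_complex_ofReal]
  congr 1 with t
  push_cast
  rw [← neg_sub, inv_neg, div_eq_inv_mul]
  ring

theorem ofReal_det_integral_inv_sub_mul (h : ℕ → ℝ → ℂ)
    (hh : ∀ k e, h k e = (1 / (2 * (Real.pi : ℂ) * Complex.I)) *
      ∫ t, Complex.ofReal ((π k).eval t) / ((t : ℂ) - e) ∂α) :
    (((of fun j j' : Fin M => ∫ t, (ε j - t)⁻¹ * (π (m + j')).eval t ∂α).det : ℝ) : ℂ) =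
      (-(2 * (Real.pi : ℂ) * Complex.I)) ^ M * (of fun i j : Fin M => h (m + j) (ε i)).det := by
  have hπI : 2 * (Real.pi : ℂ) * Complex.I ≠ 0 := by simp [Real.pi_ne_zero]
  have hentries : (of fun j j' : Fin M => ∫ t, (ε j - t)⁻¹ * (π (m + j')).eval t ∂α).map
      Complex.ofRealHom =
        (-(2 * (Real.pi : ℂ) * Complex.I)) • of fun i (j : Fin M) => h (m + j) (ε i) := by
    ext i j
    simp only [map_apply, of_apply, Matrix.smul_apply, Complex.ofRealHom_eq_coe,
      ofReal_integral_inv_sub_mul, hh, smul_eq_mul]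
    field_simp
  rw [← Complex.ofRealHom_eq_coe, RingHom.map_det, RingHom.mapMatrix_apply, hentries, det_smul,
    Fintype.card_fin]

end Measure

end FyodorovStrahov

open FyodorovStrahov

theorem fyodorov_strahov_inverse_products_general (α : Measure ℝ) [IsFiniteMeasure α] (Q : ℝ)
    (hQ : α (Set.Icc (-Q) Q)ᶜ = 0)
    (hposdef : ∀ p : Polynomial ℝ, p ≠ 0 → 0 < ∫ t, (p.eval t) ^ 2 ∂α)
    (π : ℕ → Polynomial ℝ)
    (hmonic : ∀ j, (π j).Monic) (hdeg : ∀ j, (π j).natDegree = j)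
    (horth : ∀ j k, j ≠ k → ∫ t, (π j).eval t * (π k).eval t ∂α = 0)
    -- norming constants and Cauchy transforms
    (c : ℕ → ℝ) (hc : ∀ j, (c j) ^ 2 = ∫ t, ((π j).eval t) ^ 2 ∂α)
    (γ : ℕ → ℂ) (hγ : ∀ j, γ j = -(2 * (Real.pi : ℂ) * Complex.I) / (c j : ℂ) ^ 2)
    (h : ℕ → ℝ → ℂ)
    (hh : ∀ k e, h k e =
      (1 / (2 * (Real.pi : ℂ) * Complex.I)) *
        ∫ t, Complex.ofReal ((π k).eval t) / ((t : ℂ) - (e : ℂ)) ∂α)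
    (M N : ℕ) (hMN : M ≤ N)
    (ε : Fin M → ℝ) (hε : Function.Injective ε) (hεQ : ∀ i, Q < ε i)
    (Z : ℝ)
    (hZ : Z = ∫ x : Fin N → ℝ, (Vand x) ^ 2 ∂(Measure.pi fun _ => α)) :
    Complex.ofReal
        ((1 / Z) * ∫ x : Fin N → ℝ, (∏ j : Fin M, ∏ i, (ε j - x i))⁻¹ * (Vand x) ^ 2
          ∂(Measure.pi fun _ => α))
      = (-1 : ℂ) ^ (M * (M - 1) / 2) *
          ((∏ j : Fin M, γ (N - M + j)) / Complex.ofReal (Vand ε)) *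
          (Matrix.of fun i j : Fin M => h (N - M + j) (ε i)).det := by
  obtain ⟨m, rfl⟩ := Nat.exists_eq_add_of_le' hMN
  rw [Nat.add_sub_cancel, hZ, one_div_integral_Vand_sq_mul_integral_inv_prod_mul_Vand_sq hQ
    hposdef hmonic hdeg horth hc hε hεQ]
  push_cast
  rw [ofReal_det_integral_inv_sub_mul h hh]
  simp only [hγ, prod_div_distrib, prod_const, card_univ, Fintype.card_fin]
  ring

/-- Fyodorov–Strahov formula for averages of products of inverse characteristic
polynomials. -/
theorem fyodorov_strahov_inverse_products (α : Measure ℝ) [IsFiniteMeasure α] (Q : ℝ)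
    (hQ : α (Set.Icc (-Q) Q)ᶜ = 0)
    (hposdef : ∀ p : Polynomial ℝ, p ≠ 0 → 0 < ∫ t, (p.eval t) ^ 2 ∂α)
    (π : ℕ → Polynomial ℝ)
    (hmonic : ∀ j, (π j).Monic) (hdeg : ∀ j, (π j).natDegree = j)
    (horth : ∀ j k, j ≠ k → ∫ t, (π j).eval t * (π k).eval t ∂α = 0)
    -- norming constants and Cauchy transforms
    (c : ℕ → ℝ) (hc : ∀ j, (c j) ^ 2 = ∫ t, ((π j).eval t) ^ 2 ∂α)
    (γ : ℕ → ℂ) (hγ : ∀ j, γ j = -(2 * (Real.pi : ℂ) * Complex.I) / (c j : ℂ) ^ 2)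
    (h : ℕ → ℝ → ℂ)
    (hh : ∀ k e, h k e =
      (1 / (2 * (Real.pi : ℂ) * Complex.I)) *
        ∫ t, Complex.ofReal ((π k).eval t) / ((t : ℂ) - (e : ℂ)) ∂α)
    (M N : ℕ) (hM : 1 ≤ M) (hMN : M ≤ N)
    (ε : Fin M → ℝ) (hε : Function.Injective ε) (hεQ : ∀ i, Q < ε i)
    (Z : ℝ)
    (hZ : Z = ∫ x : Fin N → ℝ, (Vand x) ^ 2 ∂(Measure.pi fun _ => α)) :
    Complex.ofReal
        ((1 / Z) * ∫ x : Fin N → ℝ, (∏ j : Fin M, ∏ i, (ε j - x i))⁻¹ * (Vand x) ^ 2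
          ∂(Measure.pi fun _ => α))
      = (-1 : ℂ) ^ (M * (M - 1) / 2) *
          ((∏ j : Fin M, γ (N - M + j)) / Complex.ofReal (Vand ε)) *
          (Matrix.of fun i j : Fin M => h (N - M + j) (ε i)).det :=
  fyodorov_strahov_inverse_products_general α Q hQ hposdef π hmonic hdeg horth c hc γ hγ h hh M N
    hMN ε hε hεQ Z hZ
end
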